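/- arXiv:1805.11370 — 8 statements merged into one kernel-verified Lean document; each statement's English description precedes it below -/
import Mathlib

section
/- Let x : [0,∞) → ℝ be right-continuous with left limits (RCLL) and x(0) = 0. Define y(t) := sup_{0 ≤ s ≤ t} (−x(s)) and z(t) := x(t) + y(t). Then: (i) y is nondecreasing, right-continuous, and y(0) = 0; (ii) z(t) ≥ 0 for all t ≥ 0; (iii) ∫_{[0,∞)} z dμ_y = 0, where μ_y is the Lebesgue–Stieltjes measure associated with y. In particular, the pair (y, z) given by these formulas solves the Skorokhod problem for x: z = x + y ≥ 0, y is nondecreasing with y(0) = 0, and ∫_0^∞ z(t) dy(t) = 0. -/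
/-!
RCLL functions are bounded on compact intervals, so `y` is a finite running supremum of `-x`.
Where `z t > 0`, i.e. `-x t < y t`, right continuity of `x` makes `y` constant on some
`[t, t + δ)`, and `y` has no jump at `t` because the supremum over `[0, t]` is not attained at `t`
alone. Such points are not charged by `μ_y`: each lies in an interval `(p, q]` with rational ends
on which `y` is constant, or is the left end of a level set `{y = y q}` at which `y` is
continuous, and there are countably many of both.
-/

open Set Filter MeasureTheory Topology Function

theorem IsCompact.bddAbove_image_of_isBoundedUnder {X α : Type*} [TopologicalSpace X]
    [SemilatticeSup α] [Nonempty α] {f : X → α} {s : Set X} (hs : IsCompact s)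
    (hf : ∀ x ∈ s, IsBoundedUnder (· ≤ ·) (𝓝[s] x) f) : BddAbove (f '' s) := by
  refine hs.induction_on (p := fun t => BddAbove (f '' t)) (by simp)
    (fun _ _ hst h => h.mono (image_mono hst))
    (fun _ _ hs ht => by simpa only [image_union] using hs.union ht) fun x hx => ?_
  obtain ⟨b, hb⟩ := hf x hx
  refine ⟨{y | f y ≤ b}, hb, b, ?_⟩
  rintro _ ⟨y, hy, rfl⟩
  exact hy

theorem bddAbove_image_Icc_of_rightCts_of_leftLim {f : ℝ → ℝ}
    (hrc : ∀ t : ℝ, 0 ≤ t → ContinuousWithinAt f (Ici t) t)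
    (hll : ∀ t : ℝ, 0 < t → ∃ l : ℝ, Tendsto f (𝓝[<] t) (𝓝 l)) (T : ℝ) :
    BddAbove (f '' Icc 0 T) := by
  refine isCompact_Icc.bddAbove_image_of_isBoundedUnder fun t ht => ?_
  have hright : IsBoundedUnder (· ≤ ·) (𝓝[≥] t) f := (hrc t ht.1).isBoundedUnder_le
  rcases ht.1.eq_or_lt with rfl | hpos
  · exact hright.mono (nhdsWithin_mono _ fun _ hs => hs.1)
  · obtain ⟨l, hl⟩ := hll t hpos
    have hnhds : IsBoundedUnder (· ≤ ·) (𝓝 t) f := by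
      rw [← nhdsLT_sup_nhdsGE, IsBoundedUnder, map_sup]
      exact isBounded_sup hl.isBoundedUnder_le hright
    exact hnhds.mono nhdsWithin_le_nhds

theorem StieltjesFunction.measure_setOf_leftLim_eq_and_exists_gt_eq_eq_zero
    (f : StieltjesFunction ℝ) :
    f.measure {t | leftLim f t = f t ∧ ∃ r > t, f r = f t} = 0 := by
  set a : ℚ → ℝ := fun q => sInf {s | f s = f q}
  have hsub : {t | leftLim f t = f t ∧ ∃ r > t, f r = f t} ⊆
      (⋃ (p : ℚ) (q : ℚ) (_ : f p = f q), Ioc (p : ℝ) q) ∪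
        ⋃ (q : ℚ) (_ : leftLim f (a q) = f (a q)), {a q} := by
    rintro t ⟨hleft, r, htr, hrt⟩
    obtain ⟨q, htq, hqr⟩ := exists_rat_btwn htr
    have hqt : f q = f t := le_antisymm (hrt ▸ f.mono hqr.le) (f.mono htq.le)
    by_cases hp : ∃ p : ℚ, (p : ℝ) < t ∧ f p = f t
    · obtain ⟨p, hpt, hp⟩ := hp
      exact Or.inl (mem_iUnion₂.2 ⟨p, q, mem_iUnion.2 ⟨hp.trans hqt.symm, hpt, htq.le⟩⟩)
    · simp only [not_exists, not_and] at hp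
      have hleast : IsLeast {s | f s = f q} t := by
        refine ⟨hqt.symm, fun u hu => le_of_not_gt fun hut => ?_⟩
        obtain ⟨p, hup, hpt⟩ := exists_rat_btwn hut
        exact hp p hpt (le_antisymm (f.mono hpt.le) (hqt ▸ hu ▸ f.mono hup.le))
      have hta : t = a q := hleast.csInf_eq.symm
      exact Or.inr (mem_iUnion₂.2 ⟨q, hta ▸ hleft, hta⟩)
  refine measure_mono_null hsub (measure_union_null ?_ ?_)
  · refine measure_iUnion_null fun p => measure_iUnion_null fun q => measure_iUnion_null fun h => ?_
    simp [f.measure_Ioc, h]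
  · refine measure_iUnion_null fun q => measure_iUnion_null fun h => ?_
    simp [f.measure_singleton, h]

noncomputable def runningSup (g : ℝ → ℝ) (t : ℝ) : ℝ := sSup (g '' Icc 0 (max t 0))

section RunningSup

variable {g : ℝ → ℝ} {s t : ℝ}

theorem runningSup_zero : runningSup g 0 = g 0 := by
  simp [runningSup]

variable (hg : ∀ T, BddAbove (g '' Icc 0 T))
include hg

theorem runningSup_mono : Monotone (runningSup g) := fun a _ hab =>
  csSup_le_csSup (hg _) ((nonempty_Icc.2 (le_max_right a 0)).image g)
    (image_mono (Icc_subset_Icc_right (max_le_max_right 0 hab)))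

theorem le_runningSup (hs : 0 ≤ s) (hst : s ≤ t) : g s ≤ runningSup g t :=
  le_csSup (hg _) (mem_image_of_mem g ⟨hs, hst.trans (le_max_left t 0)⟩)

theorem eventually_runningSup_le {c : ℝ} (ht : 0 ≤ t) (hc : ∀ᶠ u in 𝓝[≥] t, g u ≤ c) :
    ∀ᶠ u in 𝓝[≥] t, runningSup g u ≤ max (runningSup g t) c := by
  obtain ⟨u, htu, hsub⟩ := mem_nhdsGE_iff_exists_Ico_subset.1 hc
  filter_upwards [Ico_mem_nhdsGE htu] with s hs
  rw [runningSup, max_eq_left (ht.trans hs.1)]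
  refine csSup_le ((nonempty_Icc.2 (ht.trans hs.1)).image g) ?_
  rintro _ ⟨v, ⟨hv0, hvs⟩, rfl⟩
  rcases le_or_gt v t with hvt | hvt
  · exact le_max_of_le_left (le_runningSup hg hv0 hvt)
  · exact le_max_of_le_right (hsub ⟨hvt.le, hvs.trans_lt hs.2⟩)

theorem continuousWithinAt_runningSup (ht : 0 ≤ t) (hgt : ContinuousWithinAt g (Ici t) t) :
    ContinuousWithinAt (runningSup g) (Ici t) t := by
  refine tendsto_order.2 ⟨fun b hb => eventually_nhdsWithin_of_forall fun s hs =>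
    hb.trans_le (runningSup_mono hg hs), fun b hb => ?_⟩
  obtain ⟨c, hc, hcb⟩ := exists_between hb
  have hgc := hgt.eventually (eventually_le_nhds ((le_runningSup hg ht le_rfl).trans_lt hc))
  filter_upwards [eventually_runningSup_le hg ht hgc] with s hs
  exact hs.trans_lt (max_lt hb hcb)

theorem exists_gt_runningSup_eq (ht : 0 ≤ t) (hgt : ContinuousWithinAt g (Ici t) t)
    (hlt : g t < runningSup g t) : ∃ r > t, runningSup g r = runningSup g t := by
  have h := eventually_runningSup_le hg ht (hgt.eventually (eventually_le_nhds hlt))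
  rw [max_self] at h
  obtain ⟨r, hr, htr⟩ :=
    ((h.filter_mono (nhdsWithin_mono _ Ioi_subset_Ici_self)).and eventually_mem_nhdsWithin).exists
  exact ⟨r, htr, le_antisymm hr (runningSup_mono hg htr.le)⟩

theorem leftLim_runningSup (ht : 0 ≤ t) (hlt : g t < runningSup g t) :
    leftLim (runningSup g) t = runningSup g t := by
  have hmono := runningSup_mono hg
  refine le_antisymm (hmono.leftLim_le le_rfl) ?_
  have hle : runningSup g t ≤ max (leftLim (runningSup g) t) (g t) := by
    refine csSup_le ((nonempty_Icc.2 (le_max_right t 0)).image g) ?_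
    rintro _ ⟨u, ⟨hu0, hut⟩, rfl⟩
    rcases (hut.trans_eq (max_eq_left ht)).lt_or_eq with hut | rfl
    · exact le_max_of_le_left ((le_runningSup hg hu0 le_rfl).trans (hmono.le_leftLim hut))
    · exact le_max_right _ _
  exact (le_max_iff.1 hle).resolve_right (not_le.2 hlt)

end RunningSup

/-- Skorokhod lemma (existence): for RCLL `x` on `[0,∞)` with `x(0) = 0`, the pair
`y(t) = sup_{0 ≤ s ≤ t} (−x(s))`, `z = x + y` solves the Skorokhod problem:
`y` is nondecreasing and right-continuous with `y(0) = 0`, `z ≥ 0` on `[0,∞)`, and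
`∫_{[0,∞)} z dμ_y = 0` for the Lebesgue–Stieltjes measure `μ_y` of `y`. -/
theorem skorokhod_existence (x : ℝ → ℝ)
    (hrc : ∀ t : ℝ, 0 ≤ t → ContinuousWithinAt x (Ici t) t)
    (hll : ∀ t : ℝ, 0 < t → ∃ l : ℝ, Tendsto x (nhdsWithin t (Iio t)) (nhds l))
    (hx0 : x 0 = 0)
    (y z : ℝ → ℝ)
    (hy : ∀ t : ℝ, y t = sSup ((fun s => - x s) '' Icc 0 (max t 0)))
    (hz : ∀ t : ℝ, z t = x t + y t) :
    Monotone y ∧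
    (∀ t : ℝ, 0 ≤ t → ContinuousWithinAt y (Ici t) t) ∧
    y 0 = 0 ∧
    (∀ t : ℝ, 0 ≤ t → 0 ≤ z t) ∧
    (∀ f : StieltjesFunction ℝ, (∀ t, f t = y t) →
      ∫⁻ t in Ici (0 : ℝ), ENNReal.ofReal (z t) ∂f.measure = 0) := by
  obtain rfl : y = runningSup (fun s => -x s) := funext hy
  have hrc' : ∀ t : ℝ, 0 ≤ t → ContinuousWithinAt (fun s => -x s) (Ici t) t :=
    fun t ht => (hrc t ht).neg
  have hbdd := bddAbove_image_Icc_of_rightCts_of_leftLim hrc'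
    fun t ht => let ⟨l, hl⟩ := hll t ht; ⟨-l, hl.neg⟩
  have hz_pos : ∀ t, 0 ≤ t → 0 < z t → leftLim (runningSup (fun s => -x s)) t =
      runningSup (fun s => -x s) t ∧ ∃ r > t, runningSup (fun s => -x s) r =
        runningSup (fun s => -x s) t := by
    intro t ht hzt
    have hlt : -x t < runningSup (fun s => -x s) t := by linarith [hz t]
    exact ⟨leftLim_runningSup hbdd ht hlt, exists_gt_runningSup_eq hbdd ht (hrc' t ht) hlt⟩
  refine ⟨runningSup_mono hbdd, fun t ht => continuousWithinAt_runningSup hbdd ht (hrc' t ht),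
    by simp [runningSup_zero, hx0], fun t ht => ?_, fun f hf => ?_⟩
  · linarith [hz t, le_runningSup hbdd ht le_rfl]
  · have hfy : ⇑f = runningSup (fun s => -x s) := funext hf
    refine (lintegral_congr_ae ?_).trans lintegral_zero
    rw [EventuallyEq, ae_restrict_iff' measurableSet_Ici, ae_iff]
    refine measure_mono_null (fun t ht => ?_) f.measure_setOf_leftLim_eq_and_exists_gt_eq_eq_zero
    simp only [ENNReal.ofReal_eq_zero, Classical.not_imp, not_le] at ht
    simpa only [mem_ofPred_eq, hfy] using hz_pos t ht.1 ht.2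
end

section
/- Let x : [0,∞) → ℝ be right-continuous with left limits (RCLL) and x(0) = 0. Suppose (y, z) and (ȳ, z̄) are two pairs of RCLL functions [0,∞) → ℝ such that: (a) z(t) = x(t) + y(t) ≥ 0 and z̄(t) = x(t) + ȳ(t) ≥ 0 for all t ≥ 0; (b) y and ȳ are nondecreasing with y(0) = ȳ(0) = 0; (c) ∫_{[0,∞)} z dμ_y = 0 and ∫_{[0,∞)} z̄ dμ_ȳ = 0, where μ_y, μ_ȳ are the Lebesgue–Stieltjes measures of y, ȳ. Then y = ȳ and z = z̄; moreover y(t) = sup_{0 ≤ s ≤ t} (−x(s)) for every t ≥ 0. -/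
/-!
Since `z = x + y ≥ 0` and `y` is nondecreasing, `y t` dominates `c = sup_{s ≤ t} (-x s)`.
Conversely, if `y t > c' > c`, then `z ≥ c' - c > 0` wherever `y > c'`, so the complementarity
condition forces `μ_y` to vanish there. That set is an interval `(s₁, t]` or `[s₁, t]`, and
`y` climbs above `c'` on it either through the mass of `(s₁, t]` or through an atom at `s₁`;
either way `μ_y` charges it. So `y` is the running maximum of `-x`, which pins down `y`, and
then `z = x + y`.
-/

open Set Filter MeasureTheory Topology

theorem measure_eq_zero_of_le_of_setLIntegral_eq_zero {α : Type*} [MeasurableSpace α]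
    {μ : Measure α} {f : α → ℝ} {S A : Set α} {ε : ℝ}
    (hf : ∫⁻ s in S, ENNReal.ofReal (f s) ∂μ = 0) (hA : MeasurableSet A) (hAS : A ⊆ S)
    (hε : 0 < ε) (hfA : ∀ s ∈ A, ε ≤ f s) : μ A = 0 := by
  have hbound : ENNReal.ofReal ε * μ A ≤ 0 :=
    calc ENNReal.ofReal ε * μ A = ∫⁻ _ in A, ENNReal.ofReal ε ∂μ :=
          (setLIntegral_const A _).symm
      _ ≤ ∫⁻ s in A, ENNReal.ofReal (f s) ∂μ :=
        setLIntegral_mono' hA fun s hs => ENNReal.ofReal_le_ofReal (hfA s hs)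
      _ ≤ ∫⁻ s in S, ENNReal.ofReal (f s) ∂μ := lintegral_mono_set hAS
      _ = 0 := hf
  simpa [hε.not_ge] using hbound

section Stieltjes

variable {y : ℝ → ℝ} {μ : Measure ℝ}
  (hμ : ∀ a b : ℝ, 0 ≤ a → a ≤ b → μ (Ioc a b) = ENNReal.ofReal (y b - y a))
include hμ

theorem ofReal_sub_le_measure_singleton {b c : ℝ} (hb : 0 < b)
    (hc : ∀ s ∈ Ico 0 b, y s ≤ c) :
    ENNReal.ofReal (y b - c) ≤ μ {b} := by
  have hinter : ⋂ r > 0, Ioc (b - r) b = {b} := by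
    ext s
    simp only [mem_iInter, mem_Ioc, mem_singleton_iff]
    refine ⟨fun h => le_antisymm (h 1 one_pos).2 ?_, fun hs r hr => ⟨by linarith, hs.le⟩⟩
    exact le_of_forall_pos_lt_add fun r hr => by linarith [(h r hr).1]
  have htendsto : Tendsto (fun r => μ (Ioc (b - r) b)) (𝓝[>] 0) (𝓝 (μ {b})) := by
    rw [← hinter]
    refine tendsto_measure_biInter_gt (fun r _ => nullMeasurableSet_Ioc)
      (fun r r' _ hrr' => Ioc_subset_Ioc_left (by linarith)) ⟨b, hb, ?_⟩
    rw [hμ _ _ (by simp) (by linarith)]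
    exact ENNReal.ofReal_ne_top
  refine ge_of_tendsto htendsto ?_
  filter_upwards [Ioo_mem_nhdsGT hb] with r hr
  have hbr : b - r ∈ Ico 0 b := ⟨by linarith [hr.2], by linarith [hr.1]⟩
  rw [hμ _ _ hbr.1 hbr.2.le]
  exact ENNReal.ofReal_le_ofReal (by linarith [hc _ hbr])

theorem le_of_forall_measure_eq_zero (hmono : MonotoneOn y (Ici 0)) {t c : ℝ} (ht : 0 ≤ t)
    (h0 : y 0 ≤ c)
    (hnull : ∀ A, MeasurableSet A → A ⊆ Icc 0 t → (∀ s ∈ A, c < y s) → μ A = 0) :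
    y t ≤ c := by
  by_contra! hct
  set T := {s ∈ Icc 0 t | c < y s}
  have htT : t ∈ T := ⟨⟨ht, le_rfl⟩, hct⟩
  have hT0 : 0 ∈ lowerBounds T := fun s hs => hs.1.1
  set s₁ := sInf T
  have hs₁0 : 0 ≤ s₁ := le_csInf ⟨t, htT⟩ hT0
  have hs₁t : s₁ ≤ t := csInf_le ⟨0, hT0⟩ htT
  by_cases hjump : c < y s₁
  · have hs₁pos : 0 < s₁ := hs₁0.lt_of_ne fun h => by rw [← h] at hjump; linarith
    have hbelow : ∀ s ∈ Ico 0 s₁, y s ≤ c := fun s hs =>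
      not_lt.1 fun hcs =>
        (csInf_le ⟨0, hT0⟩ ⟨⟨hs.1, hs.2.le.trans hs₁t⟩, hcs⟩).not_gt hs.2
    have hatom := ofReal_sub_le_measure_singleton hμ hs₁pos hbelow
    rw [hnull {s₁} (measurableSet_singleton _) (by simp [hs₁0, hs₁t]) (by simpa using hjump),
      nonpos_iff_eq_zero, ENNReal.ofReal_eq_zero] at hatom
    linarith
  · have habove : ∀ s ∈ Ioc s₁ t, c < y s := fun s hs => by
      obtain ⟨u, huT, hus⟩ := exists_lt_of_csInf_lt ⟨t, htT⟩ hs.1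
      exact huT.2.trans_le (hmono huT.1.1 (hs₁0.trans hs.1.le) hus.le)
    have hIoc := hnull (Ioc s₁ t) measurableSet_Ioc
      (Ioc_subset_Icc_self.trans (Icc_subset_Icc_left hs₁0)) habove
    rw [hμ _ _ hs₁0 hs₁t, ENNReal.ofReal_eq_zero] at hIoc
    linarith

theorem skorokhod_eq_sSup (hmono : MonotoneOn y (Ici 0)) (hy0 : y 0 = 0) {x z : ℝ → ℝ}
    (hx0 : x 0 = 0) (hz : ∀ t : ℝ, 0 ≤ t → z t = x t + y t ∧ 0 ≤ z t)
    (hc : ∫⁻ t in Ici (0 : ℝ), ENNReal.ofReal (z t) ∂μ = 0) {t : ℝ} (ht : 0 ≤ t) :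
    y t = sSup ((fun s => - x s) '' Icc 0 t) := by
  set S := (fun s => - x s) '' Icc 0 t
  have hS : S.Nonempty := ⟨-x 0, 0, ⟨le_rfl, ht⟩, rfl⟩
  have hSy : ∀ a ∈ S, a ≤ y t := by
    rintro _ ⟨s, hs, rfl⟩
    linarith [hz s hs.1, hmono hs.1 ht hs.2]
  have hxS : ∀ s ∈ Icc 0 t, -x s ≤ sSup S := fun s hs =>
    le_csSup ⟨y t, hSy⟩ ⟨s, hs, rfl⟩
  refine le_antisymm (le_of_forall_gt_imp_ge_of_dense fun c hc' => ?_) (csSup_le hS hSy)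
  refine le_of_forall_measure_eq_zero hμ hmono ht ?_ fun A hA hAt hyA => ?_
  · linarith [hxS 0 ⟨le_rfl, ht⟩]
  refine measure_eq_zero_of_le_of_setLIntegral_eq_zero hc hA (hAt.trans Icc_subset_Ici_self)
    (sub_pos.2 hc') fun s hs => ?_
  linarith [(hz s (hAt hs).1).1, hxS s (hAt hs), hyA s hs]

end Stieltjes

theorem skorokhod_uniqueness_general (x : ℝ → ℝ)
    (hx0 : x 0 = 0)
    (y z ybar zbar : ℝ → ℝ) (μy μybar : Measure ℝ)
    -- (a): z = x + y ≥ 0 and z̄ = x + ȳ ≥ 0 on [0,∞)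
    (ha : ∀ t : ℝ, 0 ≤ t → z t = x t + y t ∧ 0 ≤ z t)
    (habar : ∀ t : ℝ, 0 ≤ t → zbar t = x t + ybar t ∧ 0 ≤ zbar t)
    -- (b): y, ȳ nondecreasing on [0,∞) with y(0) = ȳ(0) = 0
    (hymono : MonotoneOn y (Ici 0)) (hy0 : y 0 = 0)
    (hybarmono : MonotoneOn ybar (Ici 0)) (hybar0 : ybar 0 = 0)
    -- μ_y, μ_ȳ are the Lebesgue–Stieltjes measures of y, ȳ on [0,∞)
    (hμy : ∀ a b : ℝ, 0 ≤ a → a ≤ b → μy (Ioc a b) = ENNReal.ofReal (y b - y a))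
    (hμybar : ∀ a b : ℝ, 0 ≤ a → a ≤ b → μybar (Ioc a b) = ENNReal.ofReal (ybar b - ybar a))
    -- (c): ∫_{[0,∞)} z dμ_y = 0 and ∫_{[0,∞)} z̄ dμ_ȳ = 0
    (hc : ∫⁻ t in Ici (0 : ℝ), ENNReal.ofReal (z t) ∂μy = 0)
    (hcbar : ∫⁻ t in Ici (0 : ℝ), ENNReal.ofReal (zbar t) ∂μybar = 0) :
    ∀ t : ℝ, 0 ≤ t →
      y t = ybar t ∧ z t = zbar t ∧ y t = sSup ((fun s => - x s) '' Icc 0 t) := by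
  intro t ht
  have hy := skorokhod_eq_sSup hμy hymono hy0 hx0 ha hc ht
  have hyy : y t = ybar t :=
    hy.trans (skorokhod_eq_sSup hμybar hybarmono hybar0 hx0 habar hcbar ht).symm
  refine ⟨hyy, ?_, hy⟩
  rw [(ha t ht).1, (habar t ht).1, hyy]

/-- Skorokhod lemma (uniqueness): if `(y, z)` and `(ȳ, z̄)` are two RCLL solutions of the
Skorokhod problem for `x` (i.e. `z = x + y ≥ 0` on `[0,∞)`, `y` nondecreasing with
`y(0) = 0`, and `∫_{[0,∞)} z dμ_y = 0`, where `μ_y` is the Lebesgue–Stieltjes measure of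
`y`, characterized by `μ_y((a,b]) = y(b) − y(a)` for `0 ≤ a ≤ b` and `μ_y((-∞,0]) = 0`;
similarly for `(ȳ, z̄)`), then `y = ȳ` and `z = z̄` on `[0,∞)`, and moreover
`y(t) = sup_{0 ≤ s ≤ t} (−x(s))`. -/
theorem skorokhod_uniqueness (x : ℝ → ℝ)
    (hxrc : ∀ t : ℝ, 0 ≤ t → ContinuousWithinAt x (Ici t) t)
    (hxll : ∀ t : ℝ, 0 < t → ∃ l : ℝ, Tendsto x (nhdsWithin t (Iio t)) (nhds l))
    (hx0 : x 0 = 0)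
    (y z ybar zbar : ℝ → ℝ) (μy μybar : Measure ℝ)
    -- (y, z) and (ȳ, z̄) are RCLL on [0,∞)
    (hyrc : ∀ t : ℝ, 0 ≤ t → ContinuousWithinAt y (Ici t) t)
    (hyll : ∀ t : ℝ, 0 < t → ∃ l : ℝ, Tendsto y (nhdsWithin t (Iio t)) (nhds l))
    (hzrc : ∀ t : ℝ, 0 ≤ t → ContinuousWithinAt z (Ici t) t)
    (hzll : ∀ t : ℝ, 0 < t → ∃ l : ℝ, Tendsto z (nhdsWithin t (Iio t)) (nhds l))
    (hybarrc : ∀ t : ℝ, 0 ≤ t → ContinuousWithinAt ybar (Ici t) t)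
    (hybarll : ∀ t : ℝ, 0 < t → ∃ l : ℝ, Tendsto ybar (nhdsWithin t (Iio t)) (nhds l))
    (hzbarrc : ∀ t : ℝ, 0 ≤ t → ContinuousWithinAt zbar (Ici t) t)
    (hzbarll : ∀ t : ℝ, 0 < t → ∃ l : ℝ, Tendsto zbar (nhdsWithin t (Iio t)) (nhds l))
    -- (a): z = x + y ≥ 0 and z̄ = x + ȳ ≥ 0 on [0,∞)
    (ha : ∀ t : ℝ, 0 ≤ t → z t = x t + y t ∧ 0 ≤ z t)
    (habar : ∀ t : ℝ, 0 ≤ t → zbar t = x t + ybar t ∧ 0 ≤ zbar t)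
    -- (b): y, ȳ nondecreasing on [0,∞) with y(0) = ȳ(0) = 0
    (hymono : MonotoneOn y (Ici 0)) (hy0 : y 0 = 0)
    (hybarmono : MonotoneOn ybar (Ici 0)) (hybar0 : ybar 0 = 0)
    -- μ_y, μ_ȳ are the Lebesgue–Stieltjes measures of y, ȳ on [0,∞)
    (hμy : ∀ a b : ℝ, 0 ≤ a → a ≤ b → μy (Ioc a b) = ENNReal.ofReal (y b - y a))
    (hμy0 : μy (Iic 0) = 0)
    (hμybar : ∀ a b : ℝ, 0 ≤ a → a ≤ b → μybar (Ioc a b) = ENNReal.ofReal (ybar b - ybar a))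
    (hμybar0 : μybar (Iic 0) = 0)
    -- (c): ∫_{[0,∞)} z dμ_y = 0 and ∫_{[0,∞)} z̄ dμ_ȳ = 0
    (hc : ∫⁻ t in Ici (0 : ℝ), ENNReal.ofReal (z t) ∂μy = 0)
    (hcbar : ∫⁻ t in Ici (0 : ℝ), ENNReal.ofReal (zbar t) ∂μybar = 0) :
    ∀ t : ℝ, 0 ≤ t →
      y t = ybar t ∧ z t = zbar t ∧ y t = sSup ((fun s => - x s) '' Icc 0 t) :=
  skorokhod_uniqueness_general x hx0 y z ybar zbar μy μybar ha habar hymono hy0 hybarmono hybar0 hμy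
    hμybar hc hcbar
end

section
/- Let x, x' : [0,∞) → ℝ be right-continuous with left limits (RCLL) with x(0) = x'(0) = 0, and define y(t) := sup_{0 ≤ s ≤ t}(−x(s)), y'(t) := sup_{0 ≤ s ≤ t}(−x'(s)), z := x + y, z' := x' + y'. Then for every t ≥ 0: |y(t) − y'(t)| ≤ sup_{0 ≤ s ≤ t} |x(s) − x'(s)| and |z(t) − z'(t)| ≤ 2 · sup_{0 ≤ s ≤ t} |x(s) − x'(s)|. In particular, the Skorokhod map F(x) := (y, z) is Lipschitz continuous with respect to the uniform norm on every interval [0, t]. -/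
open Set Filter Topology Bornology

/-!
The map `x ↦ sup_{[0,t]} (-x)` is 1-Lipschitz for the uniform norm on `[0, t]`: if `x` and `x'`
differ by at most `D` there, then `-x ≤ -x' + D ≤ sup (-x') + D` pointwise, so the suprema differ
by at most `D`. The bound for `z = x + y` then follows from the triangle inequality. RCLL paths
enter only to make these suprema genuine, i.e. to bound the paths on compact intervals.
-/

theorem IsCompact.isBounded_image_of_locally_isBounded {X E : Type*} [TopologicalSpace X]
    [PseudoMetricSpace E] {k : Set X} {f : X → E} (hk : IsCompact k)
    (hf : ∀ s ∈ k, ∃ u ∈ 𝓝[k] s, IsBounded (f '' u)) : IsBounded (f '' k) :=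
  hk.induction_on (p := fun u => IsBounded (f '' u)) (by simp)
    (fun _ _ hst ht => ht.subset (image_mono hst))
    (fun _ _ hs ht => by simpa only [image_union] using hs.union ht) hf

def IsRCLL {E : Type*} [TopologicalSpace E] (f : ℝ → E) : Prop :=
  (∀ t : ℝ, 0 ≤ t → ContinuousWithinAt f (Ici t) t) ∧
    ∀ t : ℝ, 0 < t → ∃ l : E, Tendsto f (𝓝[<] t) (𝓝 l)

namespace IsRCLL

theorem comp {E F : Type*} [TopologicalSpace E] [TopologicalSpace F] {g : E → F} {f : ℝ → E}
    (hg : Continuous g) (hf : IsRCLL f) : IsRCLL (g ∘ f) :=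
  ⟨fun t ht => hg.continuousAt.comp_continuousWithinAt (hf.1 t ht), fun t ht =>
    let ⟨l, hl⟩ := hf.2 t ht
    ⟨g l, (hg.tendsto l).comp hl⟩⟩

theorem prodMk {E F : Type*} [TopologicalSpace E] [TopologicalSpace F] {f : ℝ → E} {g : ℝ → F}
    (hf : IsRCLL f) (hg : IsRCLL g) : IsRCLL fun t => (f t, g t) :=
  ⟨fun t ht => (hf.1 t ht).prodMk (hg.1 t ht), fun t ht =>
    let ⟨l, hl⟩ := hf.2 t ht
    let ⟨l', hl'⟩ := hg.2 t ht
    ⟨(l, l'), hl.prodMk_nhds hl'⟩⟩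

theorem exists_mem_nhdsWithin_isBounded_image {E : Type*} [PseudoMetricSpace E] {f : ℝ → E}
    (hf : IsRCLL f) {s : ℝ} (hs : 0 ≤ s) : ∃ u ∈ 𝓝[Ici 0] s, IsBounded (f '' u) := by
  obtain ⟨uGE, huGE, hbddGE⟩ := Metric.exists_isBounded_image_of_tendsto (hf.1 s hs)
  rcases hs.eq_or_lt with rfl | hpos
  · exact ⟨uGE, huGE, hbddGE⟩
  obtain ⟨l, hl⟩ := hf.2 s hpos
  obtain ⟨uLT, huLT, hbddLT⟩ := Metric.exists_isBounded_image_of_tendsto hl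
  have hu : uLT ∪ uGE ∈ 𝓝 s := nhdsLT_sup_nhdsGE s ▸ union_mem_sup huLT huGE
  refine ⟨uLT ∪ uGE, nhdsWithin_le_nhds hu, ?_⟩
  simpa only [image_union] using hbddLT.union hbddGE

theorem isBounded_image_Icc {E : Type*} [PseudoMetricSpace E] {f : ℝ → E} (hf : IsRCLL f)
    (t : ℝ) : IsBounded (f '' Icc 0 t) :=
  isCompact_Icc.isBounded_image_of_locally_isBounded fun s hs =>
    let ⟨u, hu, hbdd⟩ := hf.exists_mem_nhdsWithin_isBounded_image hs.1
    ⟨u, nhdsWithin_mono s Icc_subset_Ici_self hu, hbdd⟩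

end IsRCLL

section SupremumLipschitz

variable {α : Type*} {S : Set α} {f g : α → ℝ} {D : ℝ}

theorem sSup_image_le_sSup_image_add (hS : S.Nonempty) (hg : BddAbove (g '' S))
    (h : ∀ s ∈ S, f s ≤ g s + D) : sSup (f '' S) ≤ sSup (g '' S) + D :=
  csSup_le (hS.image f) <| forall_mem_image.2 fun s hs =>
    (h s hs).trans (add_le_add_left (le_csSup hg (mem_image_of_mem g hs)) D)

theorem abs_sSup_image_sub_sSup_image_le (hS : S.Nonempty) (hf : BddAbove (f '' S))
    (hg : BddAbove (g '' S)) (h : ∀ s ∈ S, |f s - g s| ≤ D) :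
    |sSup (f '' S) - sSup (g '' S)| ≤ D := by
  have hfg := sSup_image_le_sSup_image_add (f := f) (D := D) hS hg fun s hs => by
    linarith [le_abs_self (f s - g s), h s hs]
  have hgf := sSup_image_le_sSup_image_add (f := g) (D := D) hS hf fun s hs => by
    linarith [neg_abs_le (f s - g s), h s hs]
  exact abs_sub_le_iff.2 ⟨by linarith, by linarith⟩

end SupremumLipschitz

theorem skorokhod_map_lipschitz_general (x x' : ℝ → ℝ)
    (hxrc : ∀ t : ℝ, 0 ≤ t → ContinuousWithinAt x (Ici t) t)
    (hxll : ∀ t : ℝ, 0 < t → ∃ l : ℝ, Tendsto x (nhdsWithin t (Iio t)) (nhds l))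
    (hx'rc : ∀ t : ℝ, 0 ≤ t → ContinuousWithinAt x' (Ici t) t)
    (hx'll : ∀ t : ℝ, 0 < t → ∃ l : ℝ, Tendsto x' (nhdsWithin t (Iio t)) (nhds l))
    (y y' z z' : ℝ → ℝ)
    (hy : ∀ t : ℝ, 0 ≤ t → y t = sSup ((fun s => - x s) '' Icc 0 t))
    (hy' : ∀ t : ℝ, 0 ≤ t → y' t = sSup ((fun s => - x' s) '' Icc 0 t))
    (hz : ∀ t : ℝ, 0 ≤ t → z t = x t + y t)
    (hz' : ∀ t : ℝ, 0 ≤ t → z' t = x' t + y' t) :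
    ∀ t : ℝ, 0 ≤ t →
      |y t - y' t| ≤ sSup ((fun s => |x s - x' s|) '' Icc 0 t) ∧
      |z t - z' t| ≤ 2 * sSup ((fun s => |x s - x' s|) '' Icc 0 t) := by
  intro t ht
  have hx : IsRCLL x := ⟨hxrc, hxll⟩
  have hx' : IsRCLL x' := ⟨hx'rc, hx'll⟩
  have hbdd {h : ℝ → ℝ} (hh : IsRCLL h) : BddAbove (h '' Icc 0 t) :=
    (hh.isBounded_image_Icc t).bddAbove
  set D := sSup ((fun s => |x s - x' s|) '' Icc 0 t)
  have hdist : ∀ s ∈ Icc 0 t, |x s - x' s| ≤ D := fun s hs =>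
    le_csSup (hbdd ((hx.prodMk hx').comp (continuous_fst.sub continuous_snd).abs))
      (mem_image_of_mem _ hs)
  have hyy' : |y t - y' t| ≤ D := by
    rw [hy t ht, hy' t ht]
    refine abs_sSup_image_sub_sSup_image_le (nonempty_Icc.2 ht)
      (hbdd (hx.comp continuous_neg)) (hbdd (hx'.comp continuous_neg)) fun s hs => ?_
    rw [neg_sub_neg, abs_sub_comm]
    exact hdist s hs
  refine ⟨hyy', ?_⟩
  calc |z t - z' t| = |(x t - x' t) + (y t - y' t)| := by
        rw [hz t ht, hz' t ht, add_sub_add_comm]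
    _ ≤ |x t - x' t| + |y t - y' t| := abs_add_le _ _
    _ ≤ D + D := add_le_add (hdist t (right_mem_Icc.2 ht)) hyy'
    _ = 2 * D := (two_mul D).symm

/-- Lipschitz continuity of the Skorokhod map: with
`y(t) = sup_{0 ≤ s ≤ t} (−x(s))`, `z = x + y`, and similarly `(y', z')` for `x'`,
one has `|y(t) − y'(t)| ≤ sup_{0 ≤ s ≤ t} |x(s) − x'(s)|` and
`|z(t) − z'(t)| ≤ 2 sup_{0 ≤ s ≤ t} |x(s) − x'(s)|` for every `t ≥ 0`. -/
theorem skorokhod_map_lipschitz (x x' : ℝ → ℝ)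
    (hxrc : ∀ t : ℝ, 0 ≤ t → ContinuousWithinAt x (Ici t) t)
    (hxll : ∀ t : ℝ, 0 < t → ∃ l : ℝ, Tendsto x (nhdsWithin t (Iio t)) (nhds l))
    (hx'rc : ∀ t : ℝ, 0 ≤ t → ContinuousWithinAt x' (Ici t) t)
    (hx'll : ∀ t : ℝ, 0 < t → ∃ l : ℝ, Tendsto x' (nhdsWithin t (Iio t)) (nhds l))
    (hx0 : x 0 = 0) (hx'0 : x' 0 = 0)
    (y y' z z' : ℝ → ℝ)
    (hy : ∀ t : ℝ, 0 ≤ t → y t = sSup ((fun s => - x s) '' Icc 0 t))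
    (hy' : ∀ t : ℝ, 0 ≤ t → y' t = sSup ((fun s => - x' s) '' Icc 0 t))
    (hz : ∀ t : ℝ, 0 ≤ t → z t = x t + y t)
    (hz' : ∀ t : ℝ, 0 ≤ t → z' t = x' t + y' t) :
    ∀ t : ℝ, 0 ≤ t →
      |y t - y' t| ≤ sSup ((fun s => |x s - x' s|) '' Icc 0 t) ∧
      |z t - z' t| ≤ 2 * sSup ((fun s => |x s - x' s|) '' Icc 0 t) :=
  skorokhod_map_lipschitz_general x x' hxrc hxll hx'rc hx'll y y' z z' hy hy' hz hz'
end

section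
/- Let (Ω, (H_t)_{t≥0}, H, (Ê_t)_{t≥0}) be a consistent sublinear expectation space (pointwise version), with Ê := Ê_0. Let t ≥ 0, X = (X_1,…,X_n) with each X_i ∈ H_t, Y = (Y_1,…,Y_m) with each Y_j ∈ H, and let φ : ℝ^{n+m} → ℝ be bounded and Lipschitz. Define Φ : Ω → ℝ by Φ(ω) := (Ê_t[ω' ↦ φ(X(ω), Y(ω'))])(ω), and assume Φ ∈ H_t. Then Ê[|Ê_t[φ(X,Y)] − Φ|] = 0; that is, Ê_t[φ(X,Y)] = Ê_t[φ(x,Y)]_{x=X} up to the seminorm Z ↦ Ê[|Z|]. -/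
/-- A consistent sublinear expectation space (pointwise version):
`Ht t` is the space of random variables known at time `t ≥ 0`,
`H = ⋃_{t ≥ 0} Ht t`, and `E t` is the sublinear conditional expectation at time `t`. -/
structure ConsistentSublinearExpectationSpace (Ω : Type*) where
  Ht : ℝ → Set (Ω → ℝ)
  H : Set (Ω → ℝ)
  H_eq : H = ⋃ t ∈ Set.Ici (0:ℝ), Ht t
  Ht_mono : ∀ ⦃s t : ℝ⦄, 0 ≤ s → s ≤ t → Ht s ⊆ Ht t
  Ht_zero : Ht 0 = {f | ∃ c : ℝ, f = fun _ => c}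
  const_mem : ∀ (t : ℝ), 0 ≤ t → ∀ c : ℝ, (fun _ => c) ∈ Ht t
  add_mem : ∀ (t : ℝ) (X Y : Ω → ℝ), X ∈ Ht t → Y ∈ Ht t →
    (fun ω => X ω + Y ω) ∈ Ht t
  smul_mem : ∀ (t : ℝ) (c : ℝ) (X : Ω → ℝ), X ∈ Ht t → (fun ω => c * X ω) ∈ Ht t
  abs_mem : ∀ (t : ℝ) (X : Ω → ℝ), X ∈ Ht t → (fun ω => |X ω|) ∈ Ht t
  mul_mem : ∀ (t : ℝ) (X Y : Ω → ℝ), X ∈ Ht t → Y ∈ Ht t →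
    (∃ b, ∀ ω, |X ω| ≤ b) → (∃ b, ∀ ω, |Y ω| ≤ b) → (fun ω => X ω * Y ω) ∈ Ht t
  comp_mem : ∀ (t : ℝ), 0 ≤ t → ∀ (n : ℕ) (X : Fin n → Ω → ℝ) (φ : (Fin n → ℝ) → ℝ),
    (∀ i, X i ∈ Ht t) → (∃ b, ∀ x, |φ x| ≤ b) →
    (∃ K, ∀ x y, |φ x - φ y| ≤ K * dist x y) →
    (fun ω => φ (fun i => X i ω)) ∈ Ht t
  E : ℝ → (Ω → ℝ) → Ω → ℝ
  E_mem : ∀ (t : ℝ), 0 ≤ t → ∀ X ∈ H, E t X ∈ Ht t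
  E_mono : ∀ (t : ℝ), 0 ≤ t → ∀ X ∈ H, ∀ Y ∈ H, (∀ ω, Y ω ≤ X ω) →
    ∀ ω, E t Y ω ≤ E t X ω
  E_const : ∀ (t : ℝ), 0 ≤ t → ∀ η ∈ Ht t, E t η = η
  E_subadd : ∀ (t : ℝ), 0 ≤ t → ∀ X ∈ H, ∀ Y ∈ H,
    ∀ ω, E t (fun ω' => X ω' + Y ω') ω ≤ E t X ω + E t Y ω
  E_poshom : ∀ (t : ℝ), 0 ≤ t → ∀ η ∈ Ht t, ∀ X ∈ H,
    (fun ω => η ω * X ω) ∈ H → (∀ ω, 0 ≤ η ω) → (∃ b, ∀ ω, |η ω| ≤ b) →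
    ∀ ω, E t (fun ω' => η ω' * X ω') ω = η ω * E t X ω
  E_consistent : ∀ (s t : ℝ), 0 ≤ s → s ≤ t → ∀ X ∈ H,
    ∀ ω, E s (E t X) ω = E s X ω


private lemma sum_mem_Ht {Ω : Type*} (S : ConsistentSublinearExpectationSpace Ω)
    (t : ℝ) (ht : 0 ≤ t) {ι : Type*} (s : Finset ι) (f : ι → Ω → ℝ)
    (hf : ∀ i ∈ s, f i ∈ S.Ht t) :
    (fun ω => ∑ i ∈ s, f i ω) ∈ S.Ht t := by
  classical
  induction s using Finset.induction with
  | empty => simpa using S.const_mem t ht 0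
  | @insert a s ha ih =>
      simp only [Finset.sum_insert ha]
      exact S.add_mem t _ _ (hf _ (Finset.mem_insert_self _ _))
        (ih fun i hi => hf i (Finset.mem_insert_of_mem hi))

/-- Proposition 3.1 (tower-type factorization): for `X` with coordinates in `H_t`,
`Y` with coordinates in `H`, and `φ` bounded Lipschitz on `ℝ^{n+m}`, the function
`Φ(ω) = Ê_t[φ(x, Y)]_{x = X(ω)}(ω)` (assumed to lie in `H_t`) satisfies
`Ê[|Ê_t[φ(X,Y)] − Φ|] = 0`, i.e. `Ê_t[φ(X,Y)] = Ê_t[φ(x,Y)]_{x=X}` up to the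
seminorm `Z ↦ Ê[|Z|]`. -/
theorem conditional_substitution {Ω : Type*}
    (S : ConsistentSublinearExpectationSpace Ω) (t : ℝ) (ht : 0 ≤ t)
    (n m : ℕ) (X : Fin n → Ω → ℝ) (Y : Fin m → Ω → ℝ)
    (hX : ∀ i, X i ∈ S.Ht t) (hY : ∀ j, Y j ∈ S.H)
    (φ : (Fin n → ℝ) → (Fin m → ℝ) → ℝ)
    (hφbdd : ∃ L, ∀ x y, |φ x y| ≤ L)
    (hφlip : ∃ K, ∀ x x' y y', |φ x y - φ x' y'| ≤ K * (dist x x' + dist y y'))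
    (hmem : (fun ω => φ (fun i => X i ω) (fun j => Y j ω)) ∈ S.H)
    (Φ : Ω → ℝ)
    (hΦdef : ∀ ω, Φ ω = S.E t (fun ω' => φ (fun i => X i ω) (fun j => Y j ω')) ω)
    (hΦmem : Φ ∈ S.Ht t) :
    ∀ ω, S.E 0 (fun ω' =>
      |S.E t (fun ω'' => φ (fun i => X i ω'') (fun j => Y j ω'')) ω' - Φ ω'|) ω = 0 := by
  classical
  obtain ⟨L, hL⟩ := hφbdd
  obtain ⟨K, hK⟩ := hφlip
  set K' := |K| with hK'def
  have hK'0 : 0 ≤ K' := abs_nonneg K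
  have hK' : ∀ x x' y y', |φ x y - φ x' y'| ≤ K' * (dist x x' + dist y y') := by
    intro x x' y y'
    refine (hK x x' y y').trans ?_
    exact mul_le_mul_of_nonneg_right (le_abs_self K)
      (by positivity)
  -- choose levels for the Y j and for φ(X,Y)
  choose u hu0 huY using fun j => by
    have := hY j
    rw [S.H_eq] at this
    simpa using this
  obtain ⟨s₀, hs₀0, hs₀⟩ : ∃ s₀, 0 ≤ s₀ ∧
      (fun ω => φ (fun i => X i ω) (fun j => Y j ω)) ∈ S.Ht s₀ := by
    have := hmem
    rw [S.H_eq] at this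
    simpa using this
  set T : ℝ := t + s₀ + ∑ j, u j with hTdef
  have hsum0 : (0:ℝ) ≤ ∑ j, u j := Finset.sum_nonneg fun j _ => hu0 j
  have hT0 : 0 ≤ T := by positivity
  have htT : t ≤ T := by nlinarith
  have hs₀T : s₀ ≤ T := by nlinarith
  have huT : ∀ j, u j ≤ T := by
    intro j
    have : u j ≤ ∑ j, u j :=
      Finset.single_le_sum (fun j _ => hu0 j) (Finset.mem_univ j)
    nlinarith
  have memH : ∀ {A : Ω → ℝ}, A ∈ S.Ht T → A ∈ S.H := by
    intro A hA
    rw [S.H_eq]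
    exact Set.mem_biUnion hT0 hA
  have hYT : ∀ j, Y j ∈ S.Ht T := fun j => S.Ht_mono (hu0 j) (huT j) (huY j)
  have hXYT : (fun ω => φ (fun i => X i ω) (fun j => Y j ω)) ∈ S.Ht T :=
    S.Ht_mono hs₀0 hs₀T hs₀
  -- the main pointwise identity
  have key : ∀ ω', S.E t (fun ω'' => φ (fun i => X i ω'') (fun j => Y j ω'')) ω' = Φ ω' := by
    intro ω'
    -- g dominates dist(X(·), X(ω')) and vanishes at ω'
    set g : Ω → ℝ := fun ω'' => ∑ i, |X i ω'' - X i ω'| with hgdef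
    have hg_mem : g ∈ S.Ht t := by
      refine sum_mem_Ht S t ht _ _ ?_
      intro i _
      have h1 : (fun ω'' => X i ω'' + -(X i ω')) ∈ S.Ht t :=
        S.add_mem t _ _ (hX i) (S.const_mem t ht (-(X i ω')))
      have h2 := S.abs_mem t _ h1
      simpa [sub_eq_add_neg] using h2
    have hg0 : ∀ ω'', 0 ≤ g ω'' := fun ω'' =>
      Finset.sum_nonneg fun i _ => abs_nonneg _
    have hgω' : g ω' = 0 := by simp [hgdef]
    have hdist : ∀ ω'', dist (fun i => X i ω'') (fun i => X i ω') ≤ g ω'' := by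
      intro ω''
      refine (dist_pi_le_iff (hg0 ω'')).mpr fun i => ?_
      rw [Real.dist_eq]
      exact Finset.single_le_sum (f := fun i => |X i ω'' - X i ω'|)
        (fun i _ => abs_nonneg _) (Finset.mem_univ i)
    -- pointwise Lipschitz comparison both ways
    have hcomp : ∀ ω'',
        |φ (fun i => X i ω'') (fun j => Y j ω'') - φ (fun i => X i ω') (fun j => Y j ω'')|
          ≤ K' * g ω'' := by
      intro ω''
      have h1 := hK' (fun i => X i ω'') (fun i => X i ω') (fun j => Y j ω'')
        (fun j => Y j ω'')
      simp only [dist_self, add_zero] at h1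
      exact h1.trans (mul_le_mul_of_nonneg_left (hdist ω'') hK'0)
    -- membership of the various functions
    have hψ : (fun ω'' => φ (fun i => X i ω') (fun j => Y j ω'')) ∈ S.Ht T := by
      refine S.comp_mem T hT0 m Y (fun y => φ (fun i => X i ω') y) hYT
        ⟨L, fun y => hL _ y⟩ ⟨K', fun y y' => ?_⟩
      have h1 := hK' (fun i => X i ω') (fun i => X i ω') y y'
      simpa using h1
    have hKg : (fun ω'' => K' * g ω'') ∈ S.Ht t := S.smul_mem t K' g hg_mem
    have hKgT : (fun ω'' => K' * g ω'') ∈ S.Ht T := S.Ht_mono ht htT hKg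
    have hF : (fun ω'' => φ (fun i => X i ω') (fun j => Y j ω'') + K' * g ω'') ∈ S.Ht T :=
      S.add_mem T _ _ hψ hKgT
    have hG : (fun ω'' => φ (fun i => X i ω'') (fun j => Y j ω'') + K' * g ω'') ∈ S.Ht T :=
      S.add_mem T _ _ hXYT hKgT
    -- E t (K' * g) = K' * g, which vanishes at ω'
    have hEKg : S.E t (fun ω'' => K' * g ω'') ω' = 0 := by
      have := S.E_const t ht _ hKg
      calc S.E t (fun ω'' => K' * g ω'') ω' = K' * g ω' := by rw [this]
        _ = 0 := by rw [hgω']; ring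
    have hΦ' : S.E t (fun ω'' => φ (fun i => X i ω') (fun j => Y j ω'')) ω' = Φ ω' :=
      (hΦdef ω').symm
    -- first inequality : Z ω' ≤ Φ ω'
    have le1 : S.E t (fun ω'' => φ (fun i => X i ω'') (fun j => Y j ω'')) ω' ≤ Φ ω' := by
      have hmono := S.E_mono t ht _ (memH hF) _ hmem
        (fun ω'' => by
          have := hcomp ω''
          have := (abs_le.mp this).2
          linarith) ω'
      have hsub := S.E_subadd t ht _ (memH hψ) _ (memH hKgT) ω'
      calc S.E t (fun ω'' => φ (fun i => X i ω'') (fun j => Y j ω'')) ω'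
          ≤ S.E t (fun ω'' => φ (fun i => X i ω') (fun j => Y j ω'') + K' * g ω'') ω' := hmono
        _ ≤ S.E t (fun ω'' => φ (fun i => X i ω') (fun j => Y j ω'')) ω'
              + S.E t (fun ω'' => K' * g ω'') ω' := hsub
        _ = Φ ω' := by rw [hEKg, hΦ', add_zero]
    -- second inequality : Φ ω' ≤ Z ω'
    have le2 : Φ ω' ≤ S.E t (fun ω'' => φ (fun i => X i ω'') (fun j => Y j ω'')) ω' := by
      have hmono := S.E_mono t ht _ (memH hG) _ (memH hψ)
        (fun ω'' => by
          have := hcomp ω''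
          have := (abs_le.mp this).1
          linarith) ω'
      have hsub := S.E_subadd t ht _ hmem _ (memH hKgT) ω'
      calc Φ ω' = S.E t (fun ω'' => φ (fun i => X i ω') (fun j => Y j ω'')) ω' := hΦ'.symm
        _ ≤ S.E t (fun ω'' => φ (fun i => X i ω'') (fun j => Y j ω'') + K' * g ω'') ω' := hmono
        _ ≤ S.E t (fun ω'' => φ (fun i => X i ω'') (fun j => Y j ω'')) ω'
              + S.E t (fun ω'' => K' * g ω'') ω' := hsub
        _ = _ := by rw [hEKg, add_zero]
    linarith
  intro ω
  have hzero : (fun ω' =>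
      |S.E t (fun ω'' => φ (fun i => X i ω'') (fun j => Y j ω'')) ω' - Φ ω'|)
      = (fun _ => (0:ℝ)) := by
    funext ω'
    rw [key ω']
    simp
  rw [hzero, S.E_const 0 le_rfl _ (S.const_mem 0 le_rfl 0)]
end

section
/- Let (Ω, (H_t)_{t≥0}, H, (Ê_t)_{t≥0}) be a consistent sublinear expectation space (pointwise version) satisfying Property (P). Let M = (M_t)_{t≥0} be a symmetric martingale with M_0 = 0, and assume all products of finitely many of the M_t belong to H. Let G : ℝ → ℝ, and suppose that for each a ∈ ℝ the process (½ a M_t² − G(a) t)_{t≥0} is a martingale, i.e., Ê_s[½ a M_t² − G(a) t] = ½ a M_s² − G(a) s pointwise for all 0 ≤ s ≤ t. Then for all 0 ≤ s ≤ t and all a ∈ ℝ: Ê_s[a (M_t − M_s)²] = 2 G(a) (t − s) pointwise on Ω. -/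
namespace ConsistentSublinearExpectationSpace

variable {Ω : Type*} (S : ConsistentSublinearExpectationSpace Ω) {s t : ℝ} {X Y Z : Ω → ℝ}

lemma mem_H_of_mem_Ht (ht : 0 ≤ t) (hX : X ∈ S.Ht t) : X ∈ S.H := by
  rw [S.H_eq]
  exact Set.mem_biUnion ht hX

lemma const_mem_H (c : ℝ) : (fun _ => c) ∈ S.H :=
  S.mem_H_of_mem_Ht le_rfl (S.const_mem 0 le_rfl c)

lemma const_mul_mem_H (c : ℝ) (hX : X ∈ S.H) : (fun ω => c * X ω) ∈ S.H := by
  rw [S.H_eq] at hX ⊢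
  obtain ⟨u, hu, hXu⟩ := Set.mem_iUnion₂.mp hX
  exact Set.mem_biUnion hu (S.smul_mem u c X hXu)

lemma add_mem_H (hX : X ∈ S.H) (hY : Y ∈ S.H) : (fun ω => X ω + Y ω) ∈ S.H := by
  rw [S.H_eq] at hX hY ⊢
  obtain ⟨u, hu, hXu⟩ := Set.mem_iUnion₂.mp hX
  obtain ⟨v, hv, hYv⟩ := Set.mem_iUnion₂.mp hY
  exact Set.mem_biUnion (le_max_of_le_left hu : (0 : ℝ) ≤ max u v) (S.add_mem _ X Y
    (S.Ht_mono hu (le_max_left u v) hXu) (S.Ht_mono hv (le_max_right u v) hYv))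

lemma E_add_const (ht : 0 ≤ t) (hX : X ∈ S.H) (c : ℝ) (ω : Ω) :
    S.E t (fun ω' => X ω' + c) ω = S.E t X ω + c := by
  have hE_const : ∀ d : ℝ, S.E t (fun _ => d) ω = d := fun d =>
    congrFun (S.E_const t ht _ (S.const_mem t ht d)) ω
  apply le_antisymm
  · simpa only [hE_const] using S.E_subadd t ht X hX _ (S.const_mem_H c) ω
  · have h := S.E_subadd t ht _ (S.add_mem_H hX (S.const_mem_H c)) _ (S.const_mem_H (-c)) ω
    simp only [add_neg_cancel_right, hE_const] at h
    linarith

lemma E_const_mul (ht : 0 ≤ t) (hX : X ∈ S.H) {k : ℝ} (hk : 0 ≤ k) (ω : Ω) :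
    S.E t (fun ω' => k * X ω') ω = k * S.E t X ω :=
  S.E_poshom t ht (fun _ => k) (S.const_mem t ht k) X hX (S.const_mul_mem_H k hX) (fun _ => hk)
    ⟨|k|, fun _ => le_rfl⟩ ω

lemma E_const_mul_add_const (ht : 0 ≤ t) (hX : X ∈ S.H) {k : ℝ} (hk : 0 ≤ k) (c : ℝ)
    (ω : Ω) : S.E t (fun ω' => k * X ω' + c) ω = k * S.E t X ω + c := by
  rw [S.E_add_const ht (S.const_mul_mem_H k hX), S.E_const_mul ht hX hk]

def IsSymmetricAt (t : ℝ) (Y : Ω → ℝ) : Prop :=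
  ∀ ω, S.E t Y ω = - S.E t (fun ω' => - Y ω') ω

lemma isSymmetricAt_of_mem_Ht (ht : 0 ≤ t) (hY : Y ∈ S.Ht t) : S.IsSymmetricAt t Y := by
  have hnegY : (fun ω => - Y ω) ∈ S.Ht t := by simpa using S.smul_mem t (-1) Y hY
  intro ω
  rw [S.E_const t ht Y hY, S.E_const t ht _ hnegY, neg_neg]

def HasPropertyP : Prop :=
  ∀ t : ℝ, 0 ≤ t → ∀ η ∈ S.Ht t, ∀ X ∈ S.H, ∀ Y ∈ S.H,
    (fun ω => η ω * Y ω) ∈ S.H → S.IsSymmetricAt t Y →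
    ∀ ω, S.E t (fun ω' => X ω' + η ω' * Y ω') ω = S.E t X ω + η ω * S.E t Y ω

lemma E_mul_sub_sq_of_symmetric (hP : S.HasPropertyP) (hs : 0 ≤ s) (hY : Y ∈ S.Ht s)
    (hZ : Z ∈ S.H) (hZZ : (fun ω => Z ω * Z ω) ∈ S.H) (hYZ : (fun ω => Y ω * Z ω) ∈ S.H)
    (hYY : (fun ω => Y ω * Y ω) ∈ S.H) (hEZ : ∀ ω, S.E s Z ω = Y ω)
    (hZ_symm : S.IsSymmetricAt s Z) (a : ℝ) (ω : Ω) :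
    S.E s (fun ω' => a * (Z ω' - Y ω') ^ 2) ω
      = S.E s (fun ω' => a * Z ω' ^ 2) ω - a * Y ω ^ 2 := by
  have haZZ : (fun ω => a * Z ω ^ 2) ∈ S.H := by
    simpa only [sq] using S.const_mul_mem_H a hZZ
  have hcross : (fun ω => -2 * a * Y ω * Z ω) ∈ S.H := by
    simpa only [mul_assoc] using S.const_mul_mem_H (-2 * a) hYZ
  have haYY : (fun ω => a * Y ω * Y ω) ∈ S.H := by
    simpa only [mul_assoc] using S.const_mul_mem_H a hYY
  calc S.E s (fun ω' => a * (Z ω' - Y ω') ^ 2) ω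
      = S.E s (fun ω' => (a * Z ω' ^ 2 + -2 * a * Y ω' * Z ω') + a * Y ω' * Y ω') ω := by
        congr 1; funext; ring
    _ = S.E s (fun ω' => a * Z ω' ^ 2 + -2 * a * Y ω' * Z ω') ω + a * Y ω * Y ω := by
        rw [hP s hs _ (S.smul_mem s a Y hY) _ (S.add_mem_H haZZ hcross) Y
          (S.mem_H_of_mem_Ht hs hY) haYY (S.isSymmetricAt_of_mem_Ht hs hY) ω,
          S.E_const s hs Y hY]
    _ = S.E s (fun ω' => a * Z ω' ^ 2) ω + -2 * a * Y ω * Y ω + a * Y ω * Y ω := by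
        rw [hP s hs _ (S.smul_mem s (-2 * a) Y hY) _ haZZ Z hZ hcross hZ_symm ω, hEZ]
    _ = S.E s (fun ω' => a * Z ω' ^ 2) ω - a * Y ω ^ 2 := by ring

end ConsistentSublinearExpectationSpace

theorem conditional_increment_variance_general {Ω : Type*}
    (S : ConsistentSublinearExpectationSpace Ω)
    -- Property (P)
    (hP : ∀ t : ℝ, 0 ≤ t → ∀ η ∈ S.Ht t, ∀ X ∈ S.H, ∀ Y ∈ S.H,
      (fun ω => η ω * Y ω) ∈ S.H →
      (∀ ω, S.E t Y ω = - S.E t (fun ω' => - Y ω') ω) →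
      ∀ ω, S.E t (fun ω' => X ω' + η ω' * Y ω') ω = S.E t X ω + η ω * S.E t Y ω)
    -- the symmetric martingale M
    (M : ℝ → Ω → ℝ) (hMadapted : ∀ t : ℝ, 0 ≤ t → M t ∈ S.Ht t)
    (hMmart : ∀ s t : ℝ, 0 ≤ s → s ≤ t →
      (∀ ω, S.E s (M t) ω = M s ω) ∧ (∀ ω, S.E s (fun ω' => - M t ω') ω = - M s ω))
    -- all products of finitely many of the M_t belong to H
    (hprod : ∀ (n : ℕ) (ts : Fin n → ℝ), (∀ i, 0 ≤ ts i) →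
      (fun ω => ∏ i : Fin n, M (ts i) ω) ∈ S.H)
    (G : ℝ → ℝ)
    (hGmart : ∀ a s t : ℝ, 0 ≤ s → s ≤ t →
      ∀ ω, S.E s (fun ω' => (1 / 2) * a * (M t ω') ^ 2 - G a * t) ω =
        (1 / 2) * a * (M s ω) ^ 2 - G a * s) :
    ∀ s t : ℝ, 0 ≤ s → s ≤ t → ∀ a : ℝ,
      ∀ ω, S.E s (fun ω' => a * (M t ω' - M s ω') ^ 2) ω = 2 * G a * (t - s) := by
  intro s t hs hst a ω
  have ht : 0 ≤ t := hs.trans hst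
  have hmul : ∀ u v : ℝ, 0 ≤ u → 0 ≤ v → (fun ω => M u ω * M v ω) ∈ S.H := fun u v hu hv => by
    simpa [Fin.prod_univ_two] using hprod 2 ![u, v] (Fin.forall_fin_two.2 ⟨hu, hv⟩)
  obtain ⟨hEMt, hEnegMt⟩ := hMmart s t hs hst
  have hsq_mem : (fun ω => a * M t ω ^ 2) ∈ S.H := by
    simpa only [sq] using S.const_mul_mem_H a (hmul t t ht ht)
  have hE_sq : S.E s (fun ω' => a * M t ω' ^ 2) ω = a * M s ω ^ 2 + 2 * G a * (t - s) := by
    have h := hGmart a s t hs hst ω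
    rw [show (fun ω' => 1 / 2 * a * M t ω' ^ 2 - G a * t)
        = fun ω' => 1 / 2 * (a * M t ω' ^ 2) + -(G a * t) by funext; ring,
      S.E_const_mul_add_const hs hsq_mem (by norm_num)] at h
    linarith
  rw [S.E_mul_sub_sq_of_symmetric hP hs (hMadapted s hs) (S.mem_H_of_mem_Ht ht (hMadapted t ht))
    (hmul t t ht ht) (hmul s t hs ht) (hmul s s hs hs) hEMt
    (fun ω => by rw [hEMt, hEnegMt, neg_neg]), hE_sq]
  ring

/-- If `M` is a symmetric martingale with `M_0 = 0` (all finite products of the `M_t`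
lying in `H`) and for every `a ∈ ℝ` the process `½ a M_t² − G(a) t` is a martingale,
then `Ê_s[a (M_t − M_s)²] = 2 G(a) (t − s)` for all `0 ≤ s ≤ t`. -/
theorem conditional_increment_variance {Ω : Type*}
    (S : ConsistentSublinearExpectationSpace Ω)
    -- Property (P)
    (hP : ∀ t : ℝ, 0 ≤ t → ∀ η ∈ S.Ht t, ∀ X ∈ S.H, ∀ Y ∈ S.H,
      (fun ω => η ω * Y ω) ∈ S.H →
      (∀ ω, S.E t Y ω = - S.E t (fun ω' => - Y ω') ω) →
      ∀ ω, S.E t (fun ω' => X ω' + η ω' * Y ω') ω = S.E t X ω + η ω * S.E t Y ω)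
    -- the symmetric martingale M
    (M : ℝ → Ω → ℝ) (hMadapted : ∀ t : ℝ, 0 ≤ t → M t ∈ S.Ht t)
    (hM0 : ∀ ω, M 0 ω = 0)
    (hMmart : ∀ s t : ℝ, 0 ≤ s → s ≤ t →
      (∀ ω, S.E s (M t) ω = M s ω) ∧ (∀ ω, S.E s (fun ω' => - M t ω') ω = - M s ω))
    -- all products of finitely many of the M_t belong to H
    (hprod : ∀ (n : ℕ) (ts : Fin n → ℝ), (∀ i, 0 ≤ ts i) →
      (fun ω => ∏ i : Fin n, M (ts i) ω) ∈ S.H)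
    (G : ℝ → ℝ)
    (hGmart : ∀ a s t : ℝ, 0 ≤ s → s ≤ t →
      ∀ ω, S.E s (fun ω' => (1 / 2) * a * (M t ω') ^ 2 - G a * t) ω =
        (1 / 2) * a * (M s ω) ^ 2 - G a * s) :
    ∀ s t : ℝ, 0 ≤ s → s ≤ t → ∀ a : ℝ,
      ∀ ω, S.E s (fun ω' => a * (M t ω' - M s ω') ^ 2) ω = 2 * G a * (t - s) :=
  conditional_increment_variance_general S hP M hMadapted hMmart hprod G hGmart
end

section
/- Let S(d) denote the space of real symmetric d×d matrices and let G : S(d) → ℝ be monotonic and sublinear, i.e., (i) G(A) ≥ G(A') whenever A − A' is positive semidefinite; (ii) G(A + A') ≤ G(A) + G(A') for all A, A' ∈ S(d); (iii) G(λA) = λG(A) for all λ ≥ 0 and A ∈ S(d). Then there exists a nonempty, bounded, closed, convex subset Γ of the set S₊(d) of positive semidefinite symmetric d×d matrices such that G(A) = ½ · sup_{γ ∈ Γ} tr(γA) for every A ∈ S(d). Moreover, there then exists a constant C > 0 such that |G(A) − G(A')| ≤ C·‖A − A'‖ for all A, A' ∈ S(d). -/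
/-!
Extend `G` to all matrices by `A ↦ G (A + Aᵀ)`, which is sublinear. By Hahn–Banach, for each
symmetric `A₀` some linear functional lies below this extension and agrees with it at `A₀`;
writing the functional as `A ↦ tr (γ A)` and replacing `γ` by its symmetric part gives a
symmetric `γ` with `tr (γ A) ≤ 2 G(A)` for all symmetric `A` and equality at `A₀`. The set `Γ`
of all such `γ` is closed and convex, and consists of positive semidefinite matrices because
`G ≤ 0` on negative semidefinite ones. Monotonicity and `‖B‖ • 1 - B ≥ 0` give
`G(B) ≤ ‖B‖ G(1)`, which yields both the Lipschitz bound and, through `‖γ‖² = tr (γ γ) ≤ 2 G(γ)`,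
the boundedness of `Γ`.
-/

attribute [local instance] Matrix.frobeniusNormedAddCommGroup

open Matrix

theorem exists_linearMap_le_sublinear_eq_at {E : Type*} [AddCommGroup E] [Module ℝ E]
    (N : E → ℝ) (N_hom : ∀ c : ℝ, 0 < c → ∀ x, N (c • x) = c * N x)
    (N_add : ∀ x y, N (x + y) ≤ N x + N y) (x₀ : E) :
    ∃ g : E →ₗ[ℝ] ℝ, (∀ x, g x ≤ N x) ∧ g x₀ = N x₀ := by
  have N_zero : N 0 = 0 := by
    have := N_hom 2 two_pos 0
    rw [smul_zero] at this
    linarith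
  have N_neg : -N (-x₀) ≤ N x₀ := by
    have := N_add x₀ (-x₀)
    rw [add_neg_cancel, N_zero] at this
    linarith
  let f := LinearPMap.mkSpanSingleton' (σ := RingHom.id ℝ) x₀ (N x₀) fun c hc => by
    rcases eq_or_ne c 0 with rfl | hc0
    · exact zero_smul _ _
    · rw [smul_eq_zero_iff_right hc0] at hc
      simp [hc, N_zero]
  have hf : ∀ x : f.domain, f x ≤ N x := by
    rintro ⟨x, hx⟩
    obtain ⟨c, rfl⟩ := Submodule.mem_span_singleton.mp hx
    rw [LinearPMap.mkSpanSingleton'_apply, RingHom.id_apply, smul_eq_mul]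
    change c * N x₀ ≤ N (c • x₀)
    rcases lt_trichotomy c 0 with hc | rfl | hc
    · rw [← neg_neg c, neg_smul, ← smul_neg, N_hom _ (neg_pos.mpr hc)]
      nlinarith
    · simp [N_zero]
    · rw [N_hom c hc]
  obtain ⟨g, hgf, hgN⟩ := exists_extension_of_le_sublinear f N N_hom N_add hf
  refine ⟨g, hgN, ?_⟩
  rw [hgf ⟨x₀, Submodule.mem_span_singleton_self x₀⟩]
  exact LinearPMap.mkSpanSingleton'_apply_self _ _ _ _

namespace Matrix

variable {n : Type*} [Fintype n]

theorem exists_trace_mul_eq {R : Type*} [CommSemiring R] (g : Matrix n n R →ₗ[R] R) :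
    ∃ γ : Matrix n n R, ∀ A, (γ * A).trace = g A := by
  classical
  refine ⟨of fun i j => g (single j i 1), fun A => ?_⟩
  change (traceLinearMap n R R ∘ₗ mulLeftLinearMap n R (of fun i j => g (single j i 1))) A = g A
  congr 1
  refine Matrix.ext_linearMap (R := R) fun i j => LinearMap.ext_ring ?_
  simp [trace_mul_single]

theorem trace_transpose_mul_of_isSymm {R : Type*} [CommSemiring R] (γ : Matrix n n R)
    {A : Matrix n n R} (hA : A.IsSymm) : (γᵀ * A).trace = (γ * A).trace := by
  rw [← trace_transpose, transpose_mul, transpose_transpose, hA.eq, trace_mul_comm]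

theorem posSemidef_of_trace_mul_nonneg {R : Type*} [CommRing R] [StarRing R] [PartialOrder R]
    [StarOrderedRing R] {γ : Matrix n n R} (hγ : γ.IsHermitian)
    (h : ∀ P : Matrix n n R, P.PosSemidef → 0 ≤ (γ * P).trace) : γ.PosSemidef :=
  .of_dotProduct_mulVec_nonneg hγ fun x => by
    simpa [mul_vecMulVec, trace_vecMulVec, dotProduct_comm] using
      h _ (posSemidef_vecMulVec_self_star x)

section Frobenius

variable {m α : Type*} [Fintype m] [NormedAddCommGroup α]

theorem norm_apply_le_frobenius_norm (A : Matrix m n α) (i : m) (j : n) : ‖A i j‖ ≤ ‖A‖ :=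
  (PiLp.norm_apply_le (WithLp.toLp 2 fun j => A i j) j).trans
    (PiLp.norm_apply_le (WithLp.toLp 2 fun i => WithLp.toLp 2 fun j => A i j) i)

theorem frobenius_norm_sq_eq_sum (A : Matrix m n α) : ‖A‖ ^ 2 = ∑ i, ∑ j, ‖A i j‖ ^ 2 := by
  change ‖WithLp.toLp 2 fun i => WithLp.toLp 2 fun j => A i j‖ ^ 2 = _
  simp [PiLp.norm_sq_eq_of_L2]

end Frobenius

theorem trace_mul_self_eq_frobenius_norm_sq {B : Matrix n n ℝ} (hB : B.IsSymm) :
    (B * B).trace = ‖B‖ ^ 2 := by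
  rw [frobenius_norm_sq_eq_sum]
  simp [trace, mul_apply, hB.apply, sq]

theorem dotProduct_mulVec_le_frobenius_norm_mul (B : Matrix n n ℝ) (x : n → ℝ) :
    x ⬝ᵥ B *ᵥ x ≤ ‖B‖ * (x ⬝ᵥ x) := by
  set M : Matrix Unit Unit ℝ := replicateRow Unit x * B * replicateCol Unit x with hM
  have hentry : x ⬝ᵥ B *ᵥ x = M () () := by
    simp only [hM, mul_apply, replicateRow_apply, replicateCol_apply, dotProduct, mulVec,
      Finset.mul_sum, Finset.sum_mul]
    rw [Finset.sum_comm]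
    simp only [mul_comm, mul_left_comm]
  have hnorm : ‖WithLp.toLp 2 x‖ ^ 2 = x ⬝ᵥ x := by
    rw [PiLp.norm_sq_eq_of_L2]
    simp [dotProduct, sq]
  calc x ⬝ᵥ B *ᵥ x ≤ ‖M‖ :=
        hentry ▸ (Real.le_norm_self _).trans (norm_apply_le_frobenius_norm M () ())
    _ ≤ ‖replicateRow Unit x‖ * ‖B‖ * ‖replicateCol Unit x‖ :=
        (frobenius_norm_mul _ _).trans (by gcongr; exact frobenius_norm_mul _ _)
    _ = ‖B‖ * (x ⬝ᵥ x) := by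
        rw [frobenius_norm_replicateRow, frobenius_norm_replicateCol, ← hnorm]
        ring

theorem posSemidef_frobenius_norm_smul_one_sub [DecidableEq n] {B : Matrix n n ℝ}
    (hB : B.IsSymm) : (‖B‖ • (1 : Matrix n n ℝ) - B).PosSemidef := by
  refine .of_dotProduct_mulVec_nonneg ?_ fun x => ?_
  · exact isHermitian_iff_isSymm.mpr ((isSymm_one.smul _).sub hB)
  · simpa [sub_mulVec, smul_mulVec, dotProduct_sub] using
      dotProduct_mulVec_le_frobenius_norm_mul B x

end Matrix

section SublinearMatrixFunction

variable {n : Type*}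

def SymmMonotone [Fintype n] (G : Matrix n n ℝ → ℝ) : Prop :=
  ∀ A A' : Matrix n n ℝ, A.IsSymm → A'.IsSymm → (A - A').PosSemidef → G A' ≤ G A

def SymmSubadditive (G : Matrix n n ℝ → ℝ) : Prop :=
  ∀ A A' : Matrix n n ℝ, A.IsSymm → A'.IsSymm → G (A + A') ≤ G A + G A'

def SymmPosHomogeneous (G : Matrix n n ℝ → ℝ) : Prop :=
  ∀ (lam : ℝ), 0 ≤ lam → ∀ A : Matrix n n ℝ, A.IsSymm → G (lam • A) = lam * G A

variable {G : Matrix n n ℝ → ℝ}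

theorem SymmPosHomogeneous.map_zero (hhom : SymmPosHomogeneous G) : G 0 = 0 := by
  simpa using hhom 0 le_rfl 0 isSymm_zero

namespace SymmMonotone

variable [Fintype n]

theorem nonneg_of_posSemidef (hmono : SymmMonotone G) (hhom : SymmPosHomogeneous G)
    {P : Matrix n n ℝ} (hP : P.PosSemidef) : 0 ≤ G P :=
  hhom.map_zero ▸ hmono P 0 (isHermitian_iff_isSymm.mp hP.1) isSymm_zero (by simpa using hP)

theorem nonpos_neg_of_posSemidef (hmono : SymmMonotone G) (hhom : SymmPosHomogeneous G)
    {P : Matrix n n ℝ} (hP : P.PosSemidef) : G (-P) ≤ 0 :=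
  hhom.map_zero ▸
    hmono 0 (-P) isSymm_zero (isHermitian_iff_isSymm.mp hP.1).neg (by simpa using hP)

variable [DecidableEq n]

theorem le_frobenius_norm_mul_apply_one (hmono : SymmMonotone G)
    (hhom : SymmPosHomogeneous G) {B : Matrix n n ℝ} (hB : B.IsSymm) : G B ≤ ‖B‖ * G 1 :=
  calc G B ≤ G (‖B‖ • 1) :=
        hmono _ B (isSymm_one.smul _) hB (posSemidef_frobenius_norm_smul_one_sub hB)
    _ = ‖B‖ * G 1 := hhom _ (norm_nonneg B) 1 isSymm_one

theorem abs_sub_le_apply_one_mul_frobenius_norm_sub (hmono : SymmMonotone G)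
    (hsub : SymmSubadditive G) (hhom : SymmPosHomogeneous G) {A A' : Matrix n n ℝ}
    (hA : A.IsSymm) (hA' : A'.IsSymm) : |G A - G A'| ≤ G 1 * ‖A - A'‖ := by
  have key : ∀ {B B' : Matrix n n ℝ}, B.IsSymm → B'.IsSymm → G B - G B' ≤ G 1 * ‖B - B'‖ := by
    intro B B' hB hB'
    have := hsub (B - B') B' (hB.sub hB') hB'
    rw [sub_add_cancel] at this
    linarith [hmono.le_frobenius_norm_mul_apply_one hhom (hB.sub hB')]
  rw [abs_sub_le_iff]
  exact ⟨key hA hA', norm_sub_rev A A' ▸ key hA' hA⟩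

end SymmMonotone

variable [Fintype n]

/-- The factor `2` accounts for the `½` in `G(A) = ½ sup_{γ ∈ Γ} tr (γ A)`. -/
def representingSet (G : Matrix n n ℝ → ℝ) : Set (Matrix n n ℝ) :=
  {γ | γ.IsSymm ∧ ∀ A : Matrix n n ℝ, A.IsSymm → (γ * A).trace ≤ 2 * G A}

theorem posSemidef_of_mem_representingSet (hmono : SymmMonotone G)
    (hhom : SymmPosHomogeneous G) {γ : Matrix n n ℝ} (hγ : γ ∈ representingSet G) :
    γ.PosSemidef := by
  refine posSemidef_of_trace_mul_nonneg (isHermitian_iff_isSymm.mpr hγ.1) fun P hP => ?_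
  have := hγ.2 (-P) (isHermitian_iff_isSymm.mp hP.1).neg
  rw [mul_neg, trace_neg] at this
  linarith [hmono.nonpos_neg_of_posSemidef hhom hP]

theorem isClosed_representingSet (G : Matrix n n ℝ → ℝ) : IsClosed (representingSet G) := by
  refine (isClosed_eq continuous_id.matrix_transpose continuous_id).inter ?_
  show IsClosed {γ : Matrix n n ℝ | ∀ A : Matrix n n ℝ, A.IsSymm → (γ * A).trace ≤ 2 * G A}
  simp only [Set.ofPred_forall]
  exact isClosed_iInter fun A => isClosed_iInter fun _ =>
    isClosed_le (continuous_id.matrix_mul continuous_const).matrix_trace continuous_const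

theorem convex_representingSet (G : Matrix n n ℝ → ℝ) : Convex ℝ (representingSet G) := by
  rintro γ ⟨hγs, hγ⟩ γ' ⟨hγ's, hγ'⟩ a b ha hb hab
  refine ⟨(hγs.smul a).add (hγ's.smul b), fun A hA => ?_⟩
  rw [add_mul, smul_mul, smul_mul, trace_add, trace_smul, trace_smul, smul_eq_mul, smul_eq_mul]
  calc a * (γ * A).trace + b * (γ' * A).trace ≤ a * (2 * G A) + b * (2 * G A) := by
        gcongr
        exacts [hγ A hA, hγ' A hA]
    _ = 2 * G A := by rw [← add_mul, hab, one_mul]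

theorem isBounded_representingSet [DecidableEq n] (hmono : SymmMonotone G)
    (hhom : SymmPosHomogeneous G) : Bornology.IsBounded (representingSet G) := by
  refine isBounded_iff_forall_norm_le.mpr ⟨2 * G 1, fun γ hγ => ?_⟩
  have h : ‖γ‖ ^ 2 ≤ ‖γ‖ * (2 * G 1) := by
    rw [← trace_mul_self_eq_frobenius_norm_sq hγ.1]
    linarith [hγ.2 γ hγ.1, hmono.le_frobenius_norm_mul_apply_one hhom hγ.1]
  rcases (norm_nonneg γ).eq_or_lt with h0 | hpos
  · rw [← h0]
    linarith [hmono.nonneg_of_posSemidef hhom PosSemidef.one]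
  · nlinarith

theorem exists_mem_representingSet_trace_mul_eq (hsub : SymmSubadditive G)
    (hhom : SymmPosHomogeneous G) {A₀ : Matrix n n ℝ} (hA₀ : A₀.IsSymm) :
    ∃ γ ∈ representingSet G, (γ * A₀).trace = 2 * G A₀ := by
  have hdouble : ∀ {A : Matrix n n ℝ}, A.IsSymm → G (A + Aᵀ) = 2 * G A := fun hA => by
    rw [hA.eq, ← two_smul ℝ, hhom 2 zero_le_two _ hA]
  obtain ⟨g, hgN, hgA₀⟩ := exists_linearMap_le_sublinear_eq_at (fun A => G (A + Aᵀ))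
    (fun c hc A => by
      simpa [transpose_smul, smul_add] using hhom c hc.le _ (isSymm_add_transpose_self A))
    (fun A B => by
      simpa [transpose_add, add_add_add_comm] using
        hsub _ _ (isSymm_add_transpose_self A) (isSymm_add_transpose_self B))
    A₀
  obtain ⟨γ, hγ⟩ := exists_trace_mul_eq g
  have htrace : ∀ {A : Matrix n n ℝ}, A.IsSymm → (((2 : ℝ)⁻¹ • (γ + γᵀ)) * A).trace = g A :=
    fun hA => by
      rw [smul_mul, add_mul, trace_smul, trace_add, trace_transpose_mul_of_isSymm γ hA, hγ,
        smul_eq_mul]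
      ring
  refine ⟨(2 : ℝ)⁻¹ • (γ + γᵀ), ⟨(isSymm_add_transpose_self γ).smul _, fun A hA => ?_⟩, ?_⟩
  · rw [htrace hA, ← hdouble hA]
    exact hgN A
  · rw [htrace hA₀, hgA₀, hdouble hA₀]

theorem eq_half_sSup_representingSet (hsub : SymmSubadditive G) (hhom : SymmPosHomogeneous G)
    {A : Matrix n n ℝ} (hA : A.IsSymm) :
    G A = 1 / 2 * sSup ((fun γ => (γ * A).trace) '' representingSet G) := by
  obtain ⟨γ, hγ, hγA⟩ := exists_mem_representingSet_trace_mul_eq hsub hhom hA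
  have hgreatest : IsGreatest ((fun γ => (γ * A).trace) '' representingSet G) (2 * G A) :=
    ⟨⟨γ, hγ, hγA⟩, by rintro _ ⟨γ', hγ', rfl⟩; exact hγ'.2 A hA⟩
  rw [hgreatest.csSup_eq]
  ring

end SublinearMatrixFunction

/-- Representation of a monotonic sublinear function `G` on symmetric `d × d` matrices:
there is a nonempty bounded closed convex set `Γ` of positive semidefinite matrices with
`G(A) = ½ sup_{γ ∈ Γ} tr(γA)` for every symmetric `A`; moreover `G` is Lipschitz:
`|G(A) − G(A')| ≤ C ‖A − A'‖` for some `C > 0` (Frobenius norm). -/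
theorem sublinear_function_representation (d : ℕ)
    (G : Matrix (Fin d) (Fin d) ℝ → ℝ)
    (hmono : ∀ A A' : Matrix (Fin d) (Fin d) ℝ, A.IsSymm → A'.IsSymm →
      (A - A').PosSemidef → G A' ≤ G A)
    (hsub : ∀ A A' : Matrix (Fin d) (Fin d) ℝ, A.IsSymm → A'.IsSymm →
      G (A + A') ≤ G A + G A')
    (hhom : ∀ (lam : ℝ), 0 ≤ lam → ∀ A : Matrix (Fin d) (Fin d) ℝ, A.IsSymm →
      G (lam • A) = lam * G A) :
    (∃ Γ : Set (Matrix (Fin d) (Fin d) ℝ), Γ.Nonempty ∧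
      (∀ γ ∈ Γ, γ.PosSemidef) ∧ Bornology.IsBounded Γ ∧ IsClosed Γ ∧ Convex ℝ Γ ∧
      ∀ A : Matrix (Fin d) (Fin d) ℝ, A.IsSymm →
        G A = (1 / 2) * sSup ((fun γ => (γ * A).trace) '' Γ)) ∧
    ∃ C : ℝ, 0 < C ∧ ∀ A A' : Matrix (Fin d) (Fin d) ℝ, A.IsSymm → A'.IsSymm →
      |G A - G A'| ≤ C * ‖A - A'‖ := by
  have hmono : SymmMonotone G := hmono
  have hG1 : 0 ≤ G 1 := hmono.nonneg_of_posSemidef hhom PosSemidef.one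
  obtain ⟨γ₀, hγ₀, -⟩ := exists_mem_representingSet_trace_mul_eq hsub hhom isSymm_zero
  refine ⟨⟨representingSet G, ⟨γ₀, hγ₀⟩,
      fun γ hγ => posSemidef_of_mem_representingSet hmono hhom hγ,
      isBounded_representingSet hmono hhom, isClosed_representingSet G,
      convex_representingSet G, fun A hA => eq_half_sSup_representingSet hsub hhom hA⟩,
    G 1 + 1, by linarith, fun A A' hA hA' => ?_⟩
  calc |G A - G A'| ≤ G 1 * ‖A - A'‖ :=
        hmono.abs_sub_le_apply_one_mul_frobenius_norm_sub hsub hhom hA hA'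
    _ ≤ (G 1 + 1) * ‖A - A'‖ := by gcongr; linarith
end

section
/- Let T > 0, p ≥ 1, and let g : ℝ → ℝ be Borel measurable. Then ∫_0^T ( ∫_ℝ |g(x)| dN(0,t)(x) ) dt ≤ T^{(p−1)/p} · (2T/π)^{1/(2p)} · ( ∫_ℝ |g(x)|^p dx )^{1/p}, where N(0,t) is the Gaussian measure on ℝ with mean 0 and variance t (the Dirac mass at 0 for t = 0), and the right-hand side is interpreted as +∞ if g ∉ L^p(ℝ). [This is Krylov's estimate E[∫_0^T |g(B_t)| d⟨B⟩_t] ≤ (E[⟨B⟩_T])^{(p−1)/p} (E[|B_T|])^{1/p} ‖g‖_{L^p} specialized to classical standard Brownian motion, for which ⟨B⟩_T = T and E[|B_T|] = √(2T/π).] -/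
/-!
For each `t > 0`, Jensen's inequality and the bound `(2πt)^{-1/2}` on the density of `N(0,t)`
give `(E|g(B_t)|)^p ≤ E|g(B_t)|^p ≤ (2πt)^{-1/2} ‖g‖_p^p`. Hölder's inequality in `t` on `[0,T]`
bounds the time integral by `T^{1-1/p} (∫_0^T E|g(B_t)|^p dt)^{1/p}`, and
`∫_0^T (2πt)^{-1/2} dt = √(2T/π)`.
-/

open MeasureTheory ProbabilityTheory Real
open scoped ENNReal NNReal

theorem lintegral_le_measure_univ_rpow_mul_lintegral_rpow {α : Type*} [MeasurableSpace α]
    {μ : Measure α} {f : α → ℝ≥0∞} (hf : AEMeasurable f μ) {p : ℝ} (hp : 1 ≤ p) :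
    ∫⁻ a, f a ∂μ ≤ μ Set.univ ^ (1 - 1 / p) * (∫⁻ a, f a ^ p ∂μ) ^ (1 / p) := by
  rcases hp.eq_or_lt with rfl | hp
  · simp
  have hpq := Real.HolderConjugate.conjExponent hp
  have hq : 1 / p.conjExponent = 1 - 1 / p := by
    rw [eq_sub_iff_add_eq, add_comm, one_div, one_div, hpq.inv_add_inv_eq_one]
  simpa [hq, mul_comm] using
    ENNReal.lintegral_mul_le_Lp_mul_Lq μ hpq hf aemeasurable_const (g := fun _ => 1)

theorem rpow_lintegral_le_lintegral_rpow {α : Type*} [MeasurableSpace α]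
    {μ : Measure α} [IsProbabilityMeasure μ] {f : α → ℝ≥0∞} (hf : AEMeasurable f μ) {p : ℝ}
    (hp : 1 ≤ p) : (∫⁻ a, f a ∂μ) ^ p ≤ ∫⁻ a, f a ^ p ∂μ := by
  rw [← ENNReal.le_rpow_inv_iff (by linarith), ← one_div]
  simpa using lintegral_le_measure_univ_rpow_mul_lintegral_rpow hf hp

theorem gaussianPDF_le (μ : ℝ) (v : ℝ≥0) (x : ℝ) :
    gaussianPDF μ v x ≤ ENNReal.ofReal (√(2 * π * v))⁻¹ := by
  refine ENNReal.ofReal_le_ofReal (mul_le_of_le_one_right (by positivity) ?_)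
  exact exp_le_one_iff.2 <|
    div_nonpos_of_nonpos_of_nonneg (by simpa using sq_nonneg _) (by positivity)

theorem lintegral_gaussianReal_le (μ : ℝ) {v : ℝ≥0} (hv : v ≠ 0) (f : ℝ → ℝ≥0∞) :
    ∫⁻ x, f x ∂gaussianReal μ v ≤ ENNReal.ofReal (√(2 * π * v))⁻¹ * ∫⁻ x, f x := by
  rw [gaussianReal_of_var_ne_zero μ hv, ← lintegral_const_mul' _ _ ENNReal.ofReal_ne_top]
  exact (lintegral_withDensity_le_lintegral_mul _ (measurable_gaussianPDF μ v) f).trans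
    (lintegral_mono fun x => mul_le_mul_left (gaussianPDF_le μ v x) _)

theorem lintegral_Ioc_ofReal_inv_sqrt_two_pi_mul {T : ℝ} (hT : 0 ≤ T) :
    ∫⁻ t in Set.Ioc 0 T, ENNReal.ofReal (√(2 * π * t))⁻¹ = ENNReal.ofReal √(2 * T / π) := by
  have hrpow : ∀ t ∈ Set.Ioc 0 T, (√(2 * π * t))⁻¹ = (√(2 * π))⁻¹ * t ^ (-(1 / 2) : ℝ) :=
    fun t ht => by rw [sqrt_mul (by positivity) t, mul_inv, rpow_neg ht.1.le, ← sqrt_eq_rpow]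
  have hint : IntegrableOn (fun t => (√(2 * π))⁻¹ * t ^ (-(1 / 2) : ℝ)) (Set.Ioc 0 T) :=
    (intervalIntegral.intervalIntegrable_rpow' (by norm_num)).1.const_mul _
  have hnonneg : ∀ᵐ t ∂volume.restrict (Set.Ioc 0 T), 0 ≤ (√(2 * π))⁻¹ * t ^ (-(1 / 2) : ℝ) :=
    (ae_restrict_iff' measurableSet_Ioc).2 <| ae_of_all _ fun t ht =>
      mul_nonneg (by positivity) (rpow_nonneg ht.1.le _)
  rw [setLIntegral_congr_fun measurableSet_Ioc fun t ht => congrArg ENNReal.ofReal (hrpow t ht),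
    ← ofReal_integral_eq_lintegral_ofReal hint hnonneg, integral_const_mul,
    ← intervalIntegral.integral_of_le hT, integral_rpow (by norm_num)]
  congr 1
  norm_num [← sqrt_eq_rpow, sqrt_div' _ pi_pos.le, sqrt_mul zero_le_two]
  field_simp
  rw [sq_sqrt zero_le_two]
  ring

/-- Krylov's estimate specialized to classical standard Brownian motion: for `T > 0`,
`p ≥ 1` and Borel `g`,
`∫_0^T E[|g(B_t)|] dt ≤ T^{(p−1)/p} · (2T/π)^{1/(2p)} · ‖g‖_{L^p(ℝ)}`,
where `B_t ∼ N(0,t)`. -/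
theorem krylov_estimate_gaussian (T p : ℝ) (hT : 0 < T) (hp : 1 ≤ p)
    (g : ℝ → ℝ) (hg : Measurable g) :
    ∫⁻ t in Set.Icc (0 : ℝ) T,
        ∫⁻ x, ENNReal.ofReal |g x| ∂(gaussianReal 0 t.toNNReal) ≤
      ENNReal.ofReal (T ^ ((p - 1) / p)) *
        ENNReal.ofReal ((2 * T / Real.pi) ^ (1 / (2 * p))) *
          (∫⁻ x, ENNReal.ofReal (|g x| ^ p)) ^ (1 / p) := by
  have hp0 : 0 < p := by linarith
  set L := ∫⁻ x, ENNReal.ofReal (|g x| ^ p)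
  set F := fun t : ℝ => ∫⁻ x, ENNReal.ofReal |g x| ∂gaussianReal 0 t.toNNReal
  have hF : Measurable F := by fun_prop
  have hFp : ∀ t ∈ Set.Ioc 0 T, F t ^ p ≤ ENNReal.ofReal (√(2 * π * t))⁻¹ * L := fun t ht => by
    calc F t ^ p ≤ ∫⁻ x, ENNReal.ofReal |g x| ^ p ∂gaussianReal 0 t.toNNReal :=
          rpow_lintegral_le_lintegral_rpow (by fun_prop) hp
      _ ≤ ENNReal.ofReal (√(2 * π * t))⁻¹ * L := by
          simp only [ENNReal.ofReal_rpow_of_nonneg (abs_nonneg _) hp0.le]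
          simpa [ht.1.le] using
            lintegral_gaussianReal_le 0 (v := t.toNNReal) (by simpa using ht.1) _
  -- `t = 0` (where `N(0,0)` is a Dirac mass without density) is a null set of times.
  calc ∫⁻ t in Set.Icc 0 T, F t = ∫⁻ t in Set.Ioc 0 T, F t := by
        rw [Measure.restrict_congr_set Ioc_ae_eq_Icc]
    _ ≤ ENNReal.ofReal T ^ (1 - 1 / p) * (∫⁻ t in Set.Ioc 0 T, F t ^ p) ^ (1 / p) := by
        simpa using lintegral_le_measure_univ_rpow_mul_lintegral_rpow
          (μ := volume.restrict (Set.Ioc 0 T)) hF.aemeasurable hp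
    _ ≤ ENNReal.ofReal T ^ (1 - 1 / p) *
          (∫⁻ t in Set.Ioc 0 T, ENNReal.ofReal (√(2 * π * t))⁻¹ * L) ^ (1 / p) := by
        gcongr _ * ?_ ^ _
        exact setLIntegral_mono' measurableSet_Ioc hFp
    _ = ENNReal.ofReal T ^ (1 - 1 / p) * (ENNReal.ofReal √(2 * T / π) * L) ^ (1 / p) := by
        rw [lintegral_mul_const L (by fun_prop), lintegral_Ioc_ofReal_inv_sqrt_two_pi_mul hT.le]
    _ = _ := by
        rw [ENNReal.mul_rpow_of_nonneg _ _ (by positivity), ← mul_assoc,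
          ENNReal.ofReal_rpow_of_nonneg hT.le (sub_nonneg.2 (div_le_one_of_le₀ hp hp0.le)),
          ENNReal.ofReal_rpow_of_nonneg (sqrt_nonneg _) (by positivity), sqrt_eq_rpow,
          ← rpow_mul (by positivity)]
        congr 4 <;> field_simp
end

section
/- Let (Ω, F) be a measurable space, 𝒫 a nonempty set of probability measures on (Ω, F), and X : [0,∞) × Ω → ℝ a jointly measurable process with X_0 = 0. Suppose there are constants σ̄² > 0, K > 0 and α ∈ (0,1) such that for every P ∈ 𝒫: (i) E_P[(X_t − X_s)²] ≤ σ̄² |t − s| for all s, t ≥ 0; and (ii) P(|X_t| < ε) ≤ K ε^{2α} t^{−α} for all t > 0 and ε > 0. Fix T > 0. Then for every sequence of partitions π_n = {0 = t_0^n < t_1^n < ⋯ < t_{k_n}^n = T} whose mesh μ(π_n) := max_i (t_{i+1}^n − t_i^n) tends to 0, one has sup_{P∈𝒫} E_P[ ∫_0^T ( Σ_{i=0}^{k_n−1} sgn(X_{t_i^n}) · 1_{[t_i^n, t_{i+1}^n)}(t) − sgn(X_t) )² dt ] → 0 as n → ∞. -/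
/-!
On a cell `[tᵢ, tᵢ₊₁)` of the partition the step process differs from `sgn X_t` only if
`|X_{tᵢ}| < ε` or `|X_t - X_{tᵢ}| ≥ ε`. For `tᵢ ≥ ε` the small-ball bound and Chebyshev's
inequality make this cost at most `4 (K ε^α + σ̄² μ(π) / ε²)` in `L²(P)`, uniformly in `P`;
the cells with `tᵢ < ε` lie in `[0, ε + μ(π))` and cost at most `4 (ε + μ(π))` in total.
Choosing `ε = μ(π)^{1/4}` makes both terms vanish with the mesh.
-/

open MeasureTheory Filter Set Topology
open scoped ENNReal

namespace Real

lemma measurable_sign : Measurable sign := by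
  unfold sign
  exact measurable_const.ite measurableSet_Iio
    (measurable_const.ite measurableSet_Ioi measurable_const)

lemma ofReal_sign_sub_sign_sq_le_four (a b : ℝ) : ENNReal.ofReal ((sign a - sign b) ^ 2) ≤ 4 := by
  rw [show (4 : ℝ≥0∞) = ENNReal.ofReal 4 by norm_num]
  apply ENNReal.ofReal_le_ofReal
  rcases sign_apply_eq a with ha | ha | ha <;> rcases sign_apply_eq b with hb | hb | hb <;>
    norm_num [ha, hb]

lemma sign_eq_sign_of_abs_sub_lt {a b ε : ℝ} (ha : ε ≤ |a|) (hab : |b - a| < ε) :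
    sign b = sign a := by
  obtain ⟨h₁, h₂⟩ := abs_sub_lt_iff.1 hab
  rcases le_abs'.1 ha with h | h
  · rw [sign_of_neg (by linarith), sign_of_neg (by linarith)]
  · rw [sign_of_pos (by linarith), sign_of_pos (by linarith)]

end Real

section Partition

variable {α β : Type*} [LinearOrder α] {m : ℕ}

noncomputable def leftStep [AddCommMonoid β] (τ : Fin (m + 1) → α) (f : α → β) (t : α) : β :=
  ∑ i : Fin m, (Ico (τ i.castSucc) (τ i.succ)).indicator (fun _ => f (τ i.castSucc)) t

lemma exists_mem_Ico_castSucc_succ {τ : Fin (m + 1) → α} {t : α} (h₀ : τ 0 ≤ t)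
    (hlast : t < τ (Fin.last m)) : ∃ i : Fin m, t ∈ Ico (τ i.castSucc) (τ i.succ) := by
  by_contra! h
  have hle : ∀ j, τ j ≤ t := Fin.induction h₀ fun i hi => not_lt.1 fun h' => h i ⟨hi, h'⟩
  exact (hle _).not_gt hlast

lemma Monotone.leftStep_eq [AddCommMonoid β] {τ : Fin (m + 1) → α} (hτ : Monotone τ)
    (f : α → β) {i : Fin m} {t : α} (ht : t ∈ Ico (τ i.castSucc) (τ i.succ)) :
    leftStep τ f t = f (τ i.castSucc) := by
  rw [leftStep, Finset.sum_eq_single_of_mem i (Finset.mem_univ i), indicator_of_mem ht]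
  intro j _ hji
  refine indicator_of_notMem (fun hj => ?_) _
  rcases hji.lt_or_gt with h | h
  · exact (hτ (Fin.succ_le_castSucc_iff.2 h)).trans ht.1 |>.not_gt hj.2
  · exact (ht.2.trans_le (hτ (Fin.succ_le_castSucc_iff.2 h))).not_ge hj.1

lemma measurable_leftStep {Ω : Type*} [MeasurableSpace Ω] [TopologicalSpace α]
    [OrderClosedTopology α] [MeasurableSpace α] [OpensMeasurableSpace α] {f : α → Ω → ℝ}
    (hf : ∀ s, Measurable (f s)) (τ : Fin (m + 1) → α) :
    Measurable fun p : Ω × α => leftStep τ (fun s => f s p.1) p.2 :=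
  Finset.measurable_sum _ fun _ _ =>
    ((hf _).comp measurable_fst).indicator (measurableSet_Ico.preimage measurable_snd)

end Partition

section Mesh

variable {m : ℕ}

noncomputable def mesh (τ : Fin (m + 1) → ℝ) : ℝ := ⨆ i : Fin m, (τ i.succ - τ i.castSucc)

lemma sub_le_mesh (τ : Fin (m + 1) → ℝ) (i : Fin m) : τ i.succ - τ i.castSucc ≤ mesh τ :=
  le_ciSup (f := fun i : Fin m => τ i.succ - τ i.castSucc) (Set.finite_range _).bddAbove i

lemma mesh_nonneg {τ : Fin (m + 1) → ℝ} (hτ : Monotone τ) : 0 ≤ mesh τ :=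
  Real.iSup_nonneg fun i => sub_nonneg.2 (hτ (Fin.castSucc_le_succ i))

lemma mesh_pos {τ : Fin (m + 1) → ℝ} (hτ : τ 0 < τ (Fin.last m)) : 0 < mesh τ := by
  obtain ⟨i, hi⟩ := exists_mem_Ico_castSucc_succ le_rfl hτ
  exact (sub_pos.2 (hi.1.trans_lt hi.2)).trans_le (sub_le_mesh τ i)

end Mesh

section SignChange

variable {Ω : Type*} [MeasurableSpace Ω] (P : Measure Ω)

lemma lintegral_sign_sub_sign_sq_le {f g : Ω → ℝ} (hf : Measurable f) (hg : Measurable g)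
    (ε : ℝ) :
    ∫⁻ ω, ENNReal.ofReal ((Real.sign (f ω) - Real.sign (g ω)) ^ 2) ∂P ≤
      4 * P {ω | |f ω| < ε} + 4 * P {ω | ε ≤ |g ω - f ω|} := by
  set A := {ω | |f ω| < ε}
  set B := {ω | ε ≤ |g ω - f ω|}
  have hA : MeasurableSet A := measurableSet_lt hf.abs measurable_const
  have hB : MeasurableSet B := measurableSet_le measurable_const (hg.sub hf).abs
  calc _ ≤ ∫⁻ ω, A.indicator (fun _ => 4) ω + B.indicator (fun _ => 4) ω ∂P :=
        lintegral_mono fun ω => ?_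
    _ = 4 * P A + 4 * P B := by
      rw [lintegral_add_left (measurable_const.indicator hA), lintegral_indicator_const hA,
        lintegral_indicator_const hB]
  have h4 := Real.ofReal_sign_sub_sign_sq_le_four (f ω) (g ω)
  by_cases hωA : ω ∈ A
  · exact h4.trans (by simp [indicator_of_mem hωA])
  by_cases hωB : ω ∈ B
  · exact h4.trans (by simp [indicator_of_mem hωB])
  simp only [A, B, mem_ofPred_eq, not_lt, not_le] at hωA hωB
  simp [Real.sign_eq_sign_of_abs_sub_lt hωA hωB]

lemma meas_le_abs_le_lintegral_sq_div {h : Ω → ℝ} (hh : Measurable h) {ε : ℝ} (hε : 0 < ε) :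
    P {ω | ε ≤ |h ω|} ≤ (∫⁻ ω, ENNReal.ofReal (h ω ^ 2) ∂P) / ENNReal.ofReal (ε ^ 2) := by
  refine (measure_mono fun ω hω => ?_).trans
    (meas_ge_le_lintegral_div (hh.pow_const 2).ennreal_ofReal.aemeasurable
      (by simp [hε.ne']) ENNReal.ofReal_ne_top)
  exact ENNReal.ofReal_le_ofReal (by simpa using pow_le_pow_left₀ hε.le hω 2)

end SignChange

section SmallBall

variable {Ω : Type*} [MeasurableSpace Ω] {P : Measure Ω} {X : ℝ → Ω → ℝ} {σ2 K α : ℝ}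

def HasIncrementBound (P : Measure Ω) (X : ℝ → Ω → ℝ) (σ2 : ℝ) : Prop :=
  ∀ s t : ℝ, 0 ≤ s → 0 ≤ t →
    ∫⁻ ω, ENNReal.ofReal ((X t ω - X s ω) ^ 2) ∂P ≤ ENNReal.ofReal (σ2 * |t - s|)

def HasSmallBallBound (P : Measure Ω) (X : ℝ → Ω → ℝ) (K α : ℝ) : Prop :=
  ∀ t ε : ℝ, 0 < t → 0 < ε → P {ω | |X t ω| < ε} ≤ ENNReal.ofReal (K * ε ^ (2 * α) * t ^ (-α))

lemma lintegral_sign_sub_sign_sq_le_of_le (hX : ∀ t, Measurable (X t))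
    (hvar : HasIncrementBound P X σ2) (hsmall : HasSmallBallBound P X K α)
    (hσ2 : 0 ≤ σ2) (hK : 0 ≤ K) (hα : 0 ≤ α) {ε s t : ℝ} (hε : 0 < ε) (hεs : ε ≤ s)
    (hst : s ≤ t) :
    ∫⁻ ω, ENNReal.ofReal ((Real.sign (X s ω) - Real.sign (X t ω)) ^ 2) ∂P ≤
      ENNReal.ofReal (4 * (K * ε ^ α + σ2 * (t - s) / ε ^ 2)) := by
  have hs : 0 < s := hε.trans_le hεs
  have hsmall_le : K * ε ^ (2 * α) * s ^ (-α) ≤ K * ε ^ α :=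
    calc K * ε ^ (2 * α) * s ^ (-α) ≤ K * ε ^ (2 * α) * ε ^ (-α) :=
          mul_le_mul_of_nonneg_left (Real.rpow_le_rpow_of_nonpos hε hεs (neg_nonpos.2 hα))
            (by positivity)
      _ = K * ε ^ α := by rw [mul_assoc, ← Real.rpow_add hε]; ring_nf
  have hcheb : P {ω | ε ≤ |X t ω - X s ω|} ≤ ENNReal.ofReal (σ2 * (t - s) / ε ^ 2) :=
    calc _ ≤ (∫⁻ ω, ENNReal.ofReal ((X t ω - X s ω) ^ 2) ∂P) / ENNReal.ofReal (ε ^ 2) :=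
          meas_le_abs_le_lintegral_sq_div P ((hX t).sub (hX s)) hε
      _ ≤ ENNReal.ofReal (σ2 * |t - s|) / ENNReal.ofReal (ε ^ 2) := by
          gcongr
          exact hvar s t hs.le (hs.trans_le hst).le
      _ = ENNReal.ofReal (σ2 * (t - s) / ε ^ 2) := by
          rw [abs_of_nonneg (sub_nonneg.2 hst), ENNReal.ofReal_div_of_pos (by positivity)]
  calc _ ≤ 4 * P {ω | |X s ω| < ε} + 4 * P {ω | ε ≤ |X t ω - X s ω|} :=
        lintegral_sign_sub_sign_sq_le P (hX s) (hX t) ε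
    _ ≤ 4 * ENNReal.ofReal (K * ε ^ α) + 4 * ENNReal.ofReal (σ2 * (t - s) / ε ^ 2) := by
        gcongr
        exact (hsmall s ε hs hε).trans (ENNReal.ofReal_le_ofReal hsmall_le)
    _ = ENNReal.ofReal (4 * (K * ε ^ α + σ2 * (t - s) / ε ^ 2)) := by
        have : 0 ≤ t - s := sub_nonneg.2 hst
        rw [mul_add, ENNReal.ofReal_add (by positivity) (by positivity),
          ENNReal.ofReal_mul (p := 4) (by norm_num), ENNReal.ofReal_mul (p := 4) (by norm_num)]
        norm_num

lemma lintegral_leftStep_sub_sign_sq_le [IsProbabilityMeasure P] (hX : ∀ t, Measurable (X t))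
    (hvar : HasIncrementBound P X σ2) (hsmall : HasSmallBallBound P X K α)
    (hσ2 : 0 ≤ σ2) (hK : 0 ≤ K) (hα : 0 ≤ α) {m : ℕ} {τ : Fin (m + 1) → ℝ} (hτ : Monotone τ)
    {ε t : ℝ} (hε : 0 < ε) (ht : t ∈ Ico (τ 0) (τ (Fin.last m))) :
    ∫⁻ ω, ENNReal.ofReal ((leftStep τ (fun s => Real.sign (X s ω)) t - Real.sign (X t ω)) ^ 2) ∂P
      ≤ ENNReal.ofReal (4 * (K * ε ^ α + σ2 * mesh τ / ε ^ 2)) +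
        (Iio (ε + mesh τ)).indicator (fun _ => 4) t := by
  obtain ⟨i, hi⟩ := exists_mem_Ico_castSucc_succ ht.1 ht.2
  simp only [hτ.leftStep_eq _ hi]
  have hgap : t - τ i.castSucc ≤ mesh τ := by linarith [hi.2, sub_le_mesh τ i]
  by_cases hεs : ε ≤ τ i.castSucc
  · refine (lintegral_sign_sub_sign_sq_le_of_le hX hvar hsmall hσ2 hK hα hε hεs hi.1).trans
      (le_add_right (ENNReal.ofReal_le_ofReal ?_))
    gcongr
  · have hts : t ∈ Iio (ε + mesh τ) := by rw [mem_Iio]; linarith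
    calc _ ≤ ∫⁻ _, 4 ∂P := lintegral_mono fun ω => Real.ofReal_sign_sub_sign_sq_le_four _ _
      _ = (Iio (ε + mesh τ)).indicator (fun _ => 4) t := by simp [indicator_of_mem hts]
      _ ≤ _ := le_add_self

lemma lintegral_setLIntegral_leftStep_sub_sign_sq_le [IsProbabilityMeasure P]
    (hX : Measurable (Function.uncurry X))
    (hvar : HasIncrementBound P X σ2) (hsmall : HasSmallBallBound P X K α)
    (hσ2 : 0 ≤ σ2) (hK : 0 ≤ K) (hα : 0 ≤ α) {m : ℕ} {τ : Fin (m + 1) → ℝ} (hτ : Monotone τ)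
    {T : ℝ} (hτ0 : τ 0 = 0) (hτT : τ (Fin.last m) = T) {ε : ℝ} (hε : 0 < ε) :
    ∫⁻ ω, (∫⁻ t in Ico (0 : ℝ) T,
        ENNReal.ofReal ((leftStep τ (fun s => Real.sign (X s ω)) t - Real.sign (X t ω)) ^ 2)) ∂P
      ≤ ENNReal.ofReal (T * (4 * (K * ε ^ α + σ2 * mesh τ / ε ^ 2)) + 4 * (ε + mesh τ)) := by
  have hXt : ∀ t, Measurable (X t) := fun t => hX.comp measurable_prodMk_left
  have hT : 0 ≤ T := hτ0 ▸ hτT ▸ hτ (Fin.zero_le _)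
  have hmesh := mesh_nonneg hτ
  set C := 4 * (K * ε ^ α + σ2 * mesh τ / ε ^ 2)
  have hmeas : Measurable fun p : Ω × ℝ => ENNReal.ofReal
      ((leftStep τ (fun s => Real.sign (X s p.1)) p.2 - Real.sign (X p.2 p.1)) ^ 2) :=
    (((measurable_leftStep (fun s => Real.measurable_sign.comp (hXt s)) τ).sub
      (Real.measurable_sign.comp (hX.comp measurable_swap))).pow_const 2).ennreal_ofReal
  rw [lintegral_lintegral_swap hmeas.aemeasurable]
  calc _ ≤ ∫⁻ t in Ico 0 T, ENNReal.ofReal C + (Iio (ε + mesh τ)).indicator (fun _ => 4) t :=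
        setLIntegral_mono' measurableSet_Ico fun t ht =>
          lintegral_leftStep_sub_sign_sq_le hXt hvar hsmall hσ2 hK hα hτ hε (by rwa [hτ0, hτT])
    _ = ENNReal.ofReal C * volume (Ico 0 T) + 4 * volume (Iio (ε + mesh τ) ∩ Ico 0 T) := by
        rw [lintegral_add_left measurable_const, setLIntegral_const,
          lintegral_indicator_const measurableSet_Iio, Measure.restrict_apply measurableSet_Iio]
    _ ≤ ENNReal.ofReal C * ENNReal.ofReal T + 4 * ENNReal.ofReal (ε + mesh τ) := by
        gcongr
        · rw [Real.volume_Ico, sub_zero]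
        · calc _ ≤ volume (Ico 0 (ε + mesh τ)) := measure_mono fun t ht => ⟨ht.2.1, ht.1⟩
            _ = _ := by rw [Real.volume_Ico, sub_zero]
    _ = ENNReal.ofReal (T * C + 4 * (ε + mesh τ)) := by
        rw [ENNReal.ofReal_add (p := T * C) (by positivity) (by positivity),
          ENNReal.ofReal_mul hT, ENNReal.ofReal_mul (p := 4) (by norm_num), mul_comm]
        norm_num

end SmallBall

theorem sgn_step_approximation_general {Ω : Type*} [MeasurableSpace Ω]
    (𝔓 : Set (Measure Ω)) (hprob : ∀ P ∈ 𝔓, IsProbabilityMeasure P)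
    (X : ℝ → Ω → ℝ) (hX : Measurable (Function.uncurry X))
    (σ2 K α : ℝ) (hσ2 : 0 < σ2) (hK : 0 < K) (hα : α ∈ Set.Ioo (0 : ℝ) 1)
    (hvar : ∀ P ∈ 𝔓, ∀ s t : ℝ, 0 ≤ s → 0 ≤ t →
      ∫⁻ ω, ENNReal.ofReal ((X t ω - X s ω) ^ 2) ∂P ≤ ENNReal.ofReal (σ2 * |t - s|))
    (hsmall : ∀ P ∈ 𝔓, ∀ t ε : ℝ, 0 < t → 0 < ε →
      P {ω | |X t ω| < ε} ≤ ENNReal.ofReal (K * ε ^ (2 * α) * t ^ (-α)))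
    (T : ℝ) (hT : 0 < T)
    (k : ℕ → ℕ) (τ : ∀ n, Fin (k n + 1) → ℝ)
    (hτ0 : ∀ n, τ n 0 = 0) (hτmono : ∀ n, StrictMono (τ n))
    (hτT : ∀ n, τ n (Fin.last (k n)) = T)
    (hmesh : Tendsto (fun n => ⨆ i : Fin (k n), (τ n i.succ - τ n i.castSucc))
      atTop (nhds 0)) :
    Tendsto (fun n => ⨆ P ∈ 𝔓, ∫⁻ ω, (∫⁻ t in Set.Ico (0 : ℝ) T,
        ENNReal.ofReal ((∑ i : Fin (k n),
            Set.indicator (Set.Ico (τ n i.castSucc) (τ n i.succ))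
              (fun _ => Real.sign (X (τ n i.castSucc) ω)) t
          - Real.sign (X t ω)) ^ 2) ∂(volume : Measure ℝ)) ∂P)
      atTop (nhds 0) := by
  set b : ℝ → ℝ := fun h => T * (4 * (K * √√h ^ α + σ2 * √h)) + 4 * (√√h + h)
  have hb : Tendsto (fun n => b (mesh (τ n))) atTop (𝓝 0) := by
    have hcont : Continuous b := by
      have := Real.continuous_rpow_const hα.1.le
      fun_prop
    have hb0 : b 0 = 0 := by simp [b, Real.zero_rpow hα.1.ne']
    exact hb0 ▸ (hcont.tendsto 0).comp hmesh
  refine tendsto_of_tendsto_of_tendsto_of_le_of_le tendsto_const_nhds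
    (by simpa using ENNReal.tendsto_ofReal hb) (fun _ => bot_le)
    fun n => iSup₂_le fun P hP => ?_
  have := hprob P hP
  have hε : 0 < √√(mesh (τ n)) := by
    have := mesh_pos (τ := τ n) (by rwa [hτ0, hτT])
    positivity
  refine (lintegral_setLIntegral_leftStep_sub_sign_sq_le hX (hvar P hP) (hsmall P hP) hσ2.le
    hK.le hα.1.le (hτmono n).monotone (hτ0 n) (hτT n) hε).trans_eq ?_
  rw [Real.sq_sqrt (Real.sqrt_nonneg _), mul_div_assoc, Real.div_sqrt]

/-- Lemma 5.4 (approximation of `sgn(X_t)` by step processes): under the variance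
bound (i) and the nondegeneracy-type small-ball estimate (ii), for any sequence of
partitions of `[0, T]` with mesh tending to `0`,
`sup_{P ∈ 𝒫} E_P[∫_0^T |Σ_i sgn(X_{t_i}) 1_{[t_i, t_{i+1})}(t) − sgn(X_t)|² dt] → 0`. -/
theorem sgn_step_approximation {Ω : Type*} [MeasurableSpace Ω]
    (𝔓 : Set (Measure Ω)) (h𝔓 : 𝔓.Nonempty) (hprob : ∀ P ∈ 𝔓, IsProbabilityMeasure P)
    (X : ℝ → Ω → ℝ) (hX : Measurable (Function.uncurry X)) (hX0 : ∀ ω, X 0 ω = 0)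
    (σ2 K α : ℝ) (hσ2 : 0 < σ2) (hK : 0 < K) (hα : α ∈ Set.Ioo (0 : ℝ) 1)
    (hvar : ∀ P ∈ 𝔓, ∀ s t : ℝ, 0 ≤ s → 0 ≤ t →
      ∫⁻ ω, ENNReal.ofReal ((X t ω - X s ω) ^ 2) ∂P ≤ ENNReal.ofReal (σ2 * |t - s|))
    (hsmall : ∀ P ∈ 𝔓, ∀ t ε : ℝ, 0 < t → 0 < ε →
      P {ω | |X t ω| < ε} ≤ ENNReal.ofReal (K * ε ^ (2 * α) * t ^ (-α)))
    (T : ℝ) (hT : 0 < T)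
    (k : ℕ → ℕ) (τ : ∀ n, Fin (k n + 1) → ℝ)
    (hτ0 : ∀ n, τ n 0 = 0) (hτmono : ∀ n, StrictMono (τ n))
    (hτT : ∀ n, τ n (Fin.last (k n)) = T)
    (hmesh : Tendsto (fun n => ⨆ i : Fin (k n), (τ n i.succ - τ n i.castSucc))
      atTop (nhds 0)) :
    Tendsto (fun n => ⨆ P ∈ 𝔓, ∫⁻ ω, (∫⁻ t in Set.Ico (0 : ℝ) T,
        ENNReal.ofReal ((∑ i : Fin (k n),
            Set.indicator (Set.Ico (τ n i.castSucc) (τ n i.succ))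
              (fun _ => Real.sign (X (τ n i.castSucc) ω)) t
          - Real.sign (X t ω)) ^ 2) ∂(volume : Measure ℝ)) ∂P)
      atTop (nhds 0) :=
  sgn_step_approximation_general 𝔓 hprob X hX σ2 K α hσ2 hK hα hvar hsmall T hT k τ hτ0 hτmono hτT
    hmesh
end
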